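/- arXiv:1805.11561 — 5 statements merged into one kernel-verified Lean document; each statement's English description precedes it below -/
import Mathlib

section
/- Suppose φ₀ and φ₁ are L^p-formal disintegrations of Banach spaces ℬ₀ and ℬ₁ respectively, and f : dom(φ₀) → dom(φ₁) is an isomorphism of φ₀ with φ₁ (an order isomorphism of the trees with respect to the prefix order such that ‖φ₁(f(ν))‖ = ‖φ₀(ν)‖ for all ν). Then there is a unique isometric isomorphism T : ℬ₀ → ℬ₁ with T(φ₀(ν)) = φ₁(f(ν)) for all ν ∈ dom(φ₀). -/
open scoped Classical

/-- `S` is a tree of finite sequences of naturals. -/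
def IsTree (S : Set (List ℕ)) : Prop :=
  S.Nonempty ∧ ∀ ν ∈ S, ∀ μ : List ℕ, μ <+: ν → μ ∈ S

/-- `φ` is summative on `S`: at each node with at least one child in `S`,
`φ` of the node is the (convergent) sum of `φ` over its children in `S`. -/
def Summative {B : Type*} [NormedAddCommGroup B] (S : Set (List ℕ)) (φ : List ℕ → B) : Prop :=
  ∀ ν ∈ S, (∃ k : ℕ, ν ++ [k] ∈ S) →
    HasSum (fun k : {k : ℕ // ν ++ [k] ∈ S} => φ (ν ++ [k.1])) (φ ν)

/-- `φ` is formally `L^p`-separating: values at pairwise incomparable nodes are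
`L^p`-formally disjointly supported. -/
def FormallySeparating {𝕜 B : Type*} [RCLike 𝕜] [NormedAddCommGroup B] [NormedSpace 𝕜 B]
    (p : ℝ) (S : Set (List ℕ)) (φ : List ℕ → B) : Prop :=
  ∀ (n : ℕ) (ν : Fin n → List ℕ), (∀ i, ν i ∈ S) →
    (∀ i j, i ≠ j → ¬ (ν i <+: ν j) ∧ ¬ (ν j <+: ν i)) →
    ∀ a : Fin n → 𝕜,
      ‖∑ i, a i • φ (ν i)‖ ^ p = ∑ i, ‖a i‖ ^ p * ‖φ (ν i)‖ ^ p

/-- `φ : S → B` is an `L^p`-formal disintegration of `B`. -/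
def IsFormalDisintegration (𝕜 : Type*) [RCLike 𝕜] {B : Type*} [NormedAddCommGroup B]
    [NormedSpace 𝕜 B] (p : ℝ) (S : Set (List ℕ)) (φ : List ℕ → B) : Prop :=
  IsTree S ∧ Summative S φ ∧ FormallySeparating (𝕜 := 𝕜) p S φ ∧
    (∀ ν ∈ S, φ ν ≠ 0) ∧
    (Submodule.span 𝕜 (φ '' S)).topologicalClosure = ⊤

/-!
For a finite combination `∑ aᵢ • φ νᵢ`, let `T` be the finite prefix-closed tree spanned by the
`νᵢ`. The combination equals `∑_{μ ∈ T} α μ • r μ`, where `α μ` is the sum of the coefficients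
of the ancestors of `μ` and `r μ = φ μ - ∑ φ c` (over the children `c` of `μ` in `T`) is the
residual at `μ`.
By summativity each residual is a limit of sums of `φ` over antichains inside a region of the
tree, and these regions are pairwise incomparable, so formal separation gives
`‖∑ aᵢ • φ νᵢ‖ ^ p = ∑_{μ ∈ T} ‖α μ‖ ^ p * (‖φ μ‖ ^ p - ∑ ‖φ c‖ ^ p)`.
The right-hand side only involves the tree and the norms `‖φ μ‖`, which an isomorphism of
disintegrations preserves. Hence `φ₀ ν ↦ φ₁ (f ν)` extends to an isometry between the dense spans,
and by completeness to an isometric isomorphism, unique by density.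
-/

open Finset

namespace FormalDisintegration

def Incomparable (μ ν : List ℕ) : Prop := ¬ μ <+: ν ∧ ¬ ν <+: μ

theorem Incomparable.symm {μ ν : List ℕ} (h : Incomparable μ ν) : Incomparable ν μ :=
  ⟨h.2, h.1⟩

theorem Incomparable.of_prefix {μ ν μ' ν' : List ℕ} (h : Incomparable μ ν) (hμ : μ <+: μ')
    (hν : ν <+: ν') : Incomparable μ' ν' := by
  refine ⟨fun h' => ?_, fun h' => ?_⟩
  · rcases List.prefix_or_prefix_of_prefix (hμ.trans h') hν with h₁ | h₁
    exacts [h.1 h₁, h.2 h₁]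
  · rcases List.prefix_or_prefix_of_prefix (hν.trans h') hμ with h₁ | h₁
    exacts [h.2 h₁, h.1 h₁]

theorem incomparable_of_length_eq {μ ν : List ℕ} (hlen : μ.length = ν.length) (hne : μ ≠ ν) :
    Incomparable μ ν :=
  ⟨fun h => hne (h.eq_of_length hlen), fun h => hne (h.eq_of_length hlen.symm).symm⟩

def IsPrefixClosed (T : Set (List ℕ)) : Prop :=
  ∀ μ ∈ T, ∀ ρ, ρ <+: μ → ρ ∈ T

def prefixes (ν : List ℕ) : Finset (List ℕ) :=
  (range (ν.length + 1)).image ν.take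

theorem mem_prefixes {ν μ : List ℕ} : μ ∈ prefixes ν ↔ μ <+: ν := by
  simp only [prefixes, mem_image, mem_range]
  refine ⟨fun ⟨i, _, h⟩ => h ▸ ν.take_prefix i, fun h => ?_⟩
  exact ⟨μ.length, Nat.lt_succ_of_le h.length_le, (List.prefix_iff_eq_take.1 h).symm⟩

theorem card_prefixes (ν : List ℕ) : (prefixes ν).card = ν.length + 1 := by
  rw [prefixes, card_image_of_injOn, card_range]
  intro i hi j hj h
  have := congrArg List.length h
  simp only [coe_range, Set.mem_Iio, List.length_take] at hi hj this
  omega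

def prefixClosure (F : Finset (List ℕ)) : Finset (List ℕ) :=
  F.biUnion prefixes

theorem mem_prefixClosure {F : Finset (List ℕ)} {μ : List ℕ} :
    μ ∈ prefixClosure F ↔ ∃ ν ∈ F, μ <+: ν := by
  simp [prefixClosure, mem_prefixes]

theorem subset_prefixClosure (F : Finset (List ℕ)) : F ⊆ prefixClosure F :=
  fun ν hν => mem_prefixClosure.2 ⟨ν, hν, List.prefix_refl ν⟩

theorem isPrefixClosed_prefixClosure (F : Finset (List ℕ)) :
    IsPrefixClosed (prefixClosure F : Set (List ℕ)) := fun μ hμ ρ hρ => by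
  obtain ⟨ν, hν, hμν⟩ := mem_prefixClosure.1 hμ
  exact mem_prefixClosure.2 ⟨ν, hν, hρ.trans hμν⟩

theorem prefixClosure_subset {S : Set (List ℕ)} (hS : IsPrefixClosed S)
    {F : Finset (List ℕ)} (hF : ↑F ⊆ S) : ↑(prefixClosure F) ⊆ S := fun μ hμ => by
  obtain ⟨ν, hν, hμν⟩ := mem_prefixClosure.1 hμ
  exact hS ν (hF hν) μ hμν

theorem prefix_dropLast_of_prefix_of_ne {ν c : List ℕ} (h : ν <+: c) (hne : ν ≠ c) :
    ν <+: c.dropLast := by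
  have hc : c ≠ [] := by
    rintro rfl
    exact hne (List.prefix_nil.1 h)
  rw [← List.dropLast_append_getLast hc, List.prefix_concat_iff] at h
  exact h.resolve_left fun h' => hne (h'.trans (List.dropLast_append_getLast hc))

def children (T : Finset (List ℕ)) (μ : List ℕ) : Finset (List ℕ) :=
  T.filter fun c => μ <+: c ∧ c.length = μ.length + 1

theorem mem_children_iff_dropLast {T : Finset (List ℕ)} {μ c : List ℕ} :
    c ∈ children T μ ↔ c ∈ T ∧ c ≠ [] ∧ c.dropLast = μ := by
  simp only [children, mem_filter]
  refine and_congr_right fun _ => ⟨fun ⟨hμc, hlen⟩ => ⟨?_, ?_⟩, ?_⟩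
  · rintro rfl
    simp at hlen
  · refine ((List.prefix_iff_eq_take.1 hμc).trans ?_).symm
    rw [List.dropLast_eq_take, hlen, Nat.add_sub_cancel]
  · rintro ⟨hc, rfl⟩
    refine ⟨c.dropLast_prefix, ?_⟩
    have := List.length_pos_iff.2 hc
    rw [List.length_dropLast]
    omega

theorem exists_eq_append_of_mem_children {T : Finset (List ℕ)} {μ c : List ℕ}
    (hc : c ∈ children T μ) : ∃ k, c = μ ++ [k] := by
  obtain ⟨-, hne, rfl⟩ := mem_children_iff_dropLast.1 hc
  exact ⟨c.getLast hne, (List.dropLast_append_getLast hne).symm⟩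

theorem append_mem_children {T : Finset (List ℕ)} {μ : List ℕ} {k : ℕ} :
    μ ++ [k] ∈ children T μ ↔ μ ++ [k] ∈ T := by
  simp [mem_children_iff_dropLast]

theorem exists_mem_children_prefix {T : Finset (List ℕ)} (hT : IsPrefixClosed (T : Set (List ℕ)))
    {μ σ : List ℕ} (hσ : σ ∈ T) (hμσ : μ <+: σ) (hne : μ ≠ σ) :
    ∃ c ∈ children T μ, c <+: σ := by
  have hlt : μ.length < σ.length :=
    lt_of_le_of_ne hμσ.length_le fun h => hne (hμσ.eq_of_length h)
  refine ⟨σ.take (μ.length + 1), mem_filter.2 ⟨hT σ hσ _ (σ.take_prefix _), ?_, ?_⟩,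
    σ.take_prefix _⟩
  · have := (List.prefix_take_le_iff (j := μ.length + 1) hlt).2 (Nat.le_succ _)
    rwa [← List.prefix_iff_eq_take.1 hμσ] at this
  · rw [List.length_take]
    omega

theorem incomparable_of_mem_children {T : Finset (List ℕ)} {μ c c' : List ℕ}
    (hc : c ∈ children T μ) (hc' : c' ∈ children T μ) (hne : c ≠ c') : Incomparable c c' :=
  incomparable_of_length_eq ((mem_filter.1 hc).2.2.trans (mem_filter.1 hc').2.2.symm) hne

section Residual

variable {B : Type*} [AddCommGroup B]

def residual (φ : List ℕ → B) (T : Finset (List ℕ)) (μ : List ℕ) : B :=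
  φ μ - ∑ c ∈ children T μ, φ c

theorem sum_residual_subtree {T : Finset (List ℕ)} (hT : IsPrefixClosed (T : Set (List ℕ)))
    (φ : List ℕ → B) {ν : List ℕ} (hν : ν ∈ T) :
    ∑ μ ∈ T with ν <+: μ, residual φ T μ = φ ν := by
  -- every node of the subtree other than `ν` is a child of exactly one node of the subtree
  have hchildren : ∑ μ ∈ T with ν <+: μ, ∑ c ∈ children T μ, φ c
      = ∑ c ∈ (T.filter (ν <+: ·)).erase ν, φ c := by
    rw [sum_comm' (t' := (T.filter (ν <+: ·)).erase ν) (s' := fun c => {c.dropLast})]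
    · simp only [sum_singleton]
    intro μ c
    simp only [mem_filter, mem_erase, mem_singleton, mem_children_iff_dropLast]
    constructor
    · rintro ⟨⟨-, hνμ⟩, hc, hcne, rfl⟩
      refine ⟨rfl, fun h => ?_, hc, hνμ.trans c.dropLast_prefix⟩
      have := hνμ.length_le
      have := List.length_pos_iff.2 hcne
      rw [List.length_dropLast, h] at *
      omega
    · rintro ⟨rfl, hne, hc, hνc⟩
      refine ⟨⟨hT c hc _ c.dropLast_prefix, prefix_dropLast_of_prefix_of_ne hνc (Ne.symm hne)⟩,
        hc, fun h => hne ?_, rfl⟩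
      subst h
      exact (List.prefix_nil.1 hνc).symm
  simp only [residual, sum_sub_distrib, hchildren]
  rw [sum_erase_eq_sub (mem_filter.2 ⟨hν, List.prefix_refl ν⟩), sub_sub_cancel]

theorem sum_smul_eq_sum_smul_residual {𝕜 : Type*} [Semiring 𝕜] [Module 𝕜 B] {ι : Type*}
    (s : Finset ι) (g : ι → List ℕ) (a : ι → 𝕜) {T : Finset (List ℕ)}
    (hT : IsPrefixClosed (T : Set (List ℕ))) (hgT : ∀ i ∈ s, g i ∈ T) (φ : List ℕ → B) :
    ∑ i ∈ s, a i • φ (g i) = ∑ μ ∈ T, (∑ i ∈ s with g i <+: μ, a i) • residual φ T μ := by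
  calc ∑ i ∈ s, a i • φ (g i)
      = ∑ i ∈ s, ∑ μ ∈ T with g i <+: μ, a i • residual φ T μ := by
        refine sum_congr rfl fun i hi => ?_
        rw [← smul_sum, sum_residual_subtree hT φ (hgT i hi)]
    _ = ∑ μ ∈ T, ∑ i ∈ s with g i <+: μ, a i • residual φ T μ :=
        sum_comm' fun i μ => by simp only [mem_filter]; tauto
    _ = ∑ μ ∈ T, (∑ i ∈ s with g i <+: μ, a i) • residual φ T μ := by
        simp only [sum_smul]

end Residual

theorem _root_.HasSum.sub_sum_mem_closure {κ E : Type*} [AddCommGroup E] [TopologicalSpace E]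
    [IsTopologicalAddGroup E] {g : κ → E} {x : E} (h : HasSum g x) (K : Finset κ) :
    x - ∑ k ∈ K, g k ∈ closure ((fun t : Finset κ => ∑ k ∈ t, g k) '' {t | Disjoint t K}) := by
  have hlim : Filter.Tendsto (fun s : Finset κ => ∑ k ∈ s, g k) Filter.atTop (nhds x) := h
  have hlim' : Filter.Tendsto (fun s : Finset κ => ∑ k ∈ s \ K, g k) Filter.atTop
      (nhds (x - ∑ k ∈ K, g k)) := by
    refine Filter.Tendsto.congr' ?_ (hlim.sub_const _)
    filter_upwards [Filter.eventually_ge_atTop K] with s hs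
    rw [sum_sdiff_eq_sub hs]
  exact mem_closure_of_tendsto hlim'
    (Filter.Eventually.of_forall fun s => ⟨s \ K, sdiff_disjoint, rfl⟩)

def antichainSums {B : Type*} [AddCommMonoid B] (D : Set (List ℕ)) (φ : List ℕ → B) : Set B :=
  {x | ∃ A : Finset (List ℕ), ↑A ⊆ D ∧ (A : Set (List ℕ)).Pairwise Incomparable ∧
    x = ∑ μ ∈ A, φ μ}

section Separation

open Function

variable {𝕜 B : Type*} [RCLike 𝕜] [NormedAddCommGroup B] [NormedSpace 𝕜 B]
  {p : ℝ} {S : Set (List ℕ)} {φ : List ℕ → B}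

theorem _root_.FormallySeparating.norm_rpow_sum_smul (hφ : FormallySeparating (𝕜 := 𝕜) p S φ)
    {κ : Type*} (t : Finset κ) (ν : κ → List ℕ) (hν : ∀ k ∈ t, ν k ∈ S)
    (hinc : (t : Set κ).Pairwise (Incomparable on ν)) (a : κ → 𝕜) :
    ‖∑ k ∈ t, a k • φ (ν k)‖ ^ p = ∑ k ∈ t, ‖a k‖ ^ p * ‖φ (ν k)‖ ^ p := by
  let e := t.equivFin.symm
  have key := hφ t.card (fun i => ν (e i)) (fun i => hν _ (e i).2)
    (fun i j hij => hinc (e i).2 (e j).2 fun h => hij (e.injective (Subtype.ext h)))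
    (fun i => a (e i))
  have h₁ : ∑ i, a (e i) • φ (ν (e i)) = ∑ k ∈ t, a k • φ (ν k) :=
    (e.sum_comp fun k : t => a k • φ (ν k)).trans (sum_coe_sort t fun k => a k • φ (ν k))
  have h₂ : ∑ i, ‖a (e i)‖ ^ p * ‖φ (ν (e i))‖ ^ p = ∑ k ∈ t, ‖a k‖ ^ p * ‖φ (ν k)‖ ^ p :=
    (e.sum_comp fun k : t => ‖a k‖ ^ p * ‖φ (ν k)‖ ^ p).trans
      (sum_coe_sort t fun k => ‖a k‖ ^ p * ‖φ (ν k)‖ ^ p)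
  rwa [h₁, h₂] at key

theorem _root_.FormallySeparating.norm_rpow_sum_smul_of_mem_antichainSums
    (hφ : FormallySeparating (𝕜 := 𝕜) p S φ) {ι : Type*} [Fintype ι] {D : ι → Set (List ℕ)}
    (hDS : ∀ i, D i ⊆ S) (hD : Pairwise fun i j => ∀ μ ∈ D i, ∀ ν ∈ D j, Incomparable μ ν)
    {w : ι → B} (hw : ∀ i, w i ∈ antichainSums (D i) φ) (α : ι → 𝕜) :
    ‖∑ i, α i • w i‖ ^ p = ∑ i, ‖α i‖ ^ p * ‖w i‖ ^ p := by
  choose A hAD hA hwA using hw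
  have hnorm (i : ι) : ‖w i‖ ^ p = ∑ μ ∈ A i, ‖φ μ‖ ^ p := by
    simpa [hwA i] using hφ.norm_rpow_sum_smul (A i) id (fun μ hμ => hDS i (hAD i hμ)) (hA i)
      (fun _ => (1 : 𝕜))
  have key := hφ.norm_rpow_sum_smul (univ.sigma A) Sigma.snd ?_ ?_ (fun x => α x.1)
  · simp only [sum_sigma, ← smul_sum, ← mul_sum, ← hwA, ← hnorm] at key
    exact key
  · rintro ⟨i, μ⟩ h
    exact hDS i (hAD i (mem_sigma.1 h).2)
  · rintro ⟨i, μ⟩ hx ⟨j, ν⟩ hy hne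
    simp only [coe_sigma, coe_univ, Set.mem_sigma_iff, Set.mem_univ, mem_coe, true_and] at hx hy
    by_cases hij : i = j
    · subst hij
      exact hA i hx hy fun h => hne (by rw [h])
    · exact hD hij μ (hAD i hx) ν (hAD j hy)

theorem _root_.FormallySeparating.norm_rpow_sum_smul_of_mem_closure (hp : 0 ≤ p)
    (hφ : FormallySeparating (𝕜 := 𝕜) p S φ) {ι : Type*} [Fintype ι] {D : ι → Set (List ℕ)}
    (hDS : ∀ i, D i ⊆ S) (hD : Pairwise fun i j => ∀ μ ∈ D i, ∀ ν ∈ D j, Incomparable μ ν)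
    {w : ι → B} (hw : ∀ i, w i ∈ closure (antichainSums (D i) φ)) (α : ι → 𝕜) :
    ‖∑ i, α i • w i‖ ^ p = ∑ i, ‖α i‖ ^ p * ‖w i‖ ^ p := by
  have hclosed : IsClosed {w : ι → B | ‖∑ i, α i • w i‖ ^ p = ∑ i, ‖α i‖ ^ p * ‖w i‖ ^ p} :=
    isClosed_eq ((by fun_prop : Continuous fun w : ι → B => ‖∑ i, α i • w i‖).rpow_const
        fun _ => Or.inr hp)
      (continuous_finsetSum _ fun i _ =>
        continuous_const.mul ((continuous_apply i).norm.rpow_const fun _ => Or.inr hp))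
  have hmem : w ∈ closure (Set.univ.pi fun i => antichainSums (D i) φ) := by
    rw [closure_pi_set]
    exact fun i _ => hw i
  refine closure_minimal (fun w' hw' => ?_) hclosed hmem
  exact hφ.norm_rpow_sum_smul_of_mem_antichainSums hDS hD (fun i => Set.mem_univ_pi.1 hw' i) α

end Separation

section Region

variable {B : Type*} [AddCommMonoid B]

theorem mem_antichainSums_of_mem {D : Set (List ℕ)} (φ : List ℕ → B) {μ : List ℕ} (hμ : μ ∈ D) :
    φ μ ∈ antichainSums D φ :=
  ⟨{μ}, by simpa using hμ, by simp, by simp⟩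

def residualRegion (S : Set (List ℕ)) (T : Finset (List ℕ)) (μ : List ℕ) : Set (List ℕ) :=
  {τ ∈ S | μ <+: τ ∧ ∀ σ ∈ T, μ <+: σ → μ ≠ σ → Incomparable τ σ}

theorem incomparable_of_mem_residualRegion {S : Set (List ℕ)} {T : Finset (List ℕ)}
    {μ μ' τ τ' : List ℕ} (hμ : μ ∈ T) (hμ' : μ' ∈ T) (hne : μ ≠ μ')
    (hτ : τ ∈ residualRegion S T μ) (hτ' : τ' ∈ residualRegion S T μ') : Incomparable τ τ' := by
  by_cases h : μ <+: μ'
  · exact (hτ.2.2 μ' hμ' h hne).of_prefix (List.prefix_refl τ) hτ'.2.1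
  by_cases h' : μ' <+: μ
  · exact ((hτ'.2.2 μ hμ h' (Ne.symm hne)).of_prefix (List.prefix_refl τ') hτ.2.1).symm
  exact Incomparable.of_prefix ⟨h, h'⟩ hτ.2.1 hτ'.2.1

theorem incomparable_of_mem_residualRegion_of_mem_children {S : Set (List ℕ)}
    {T : Finset (List ℕ)} {μ c τ τ' : List ℕ} (hτ : τ ∈ residualRegion S T μ)
    (hc : c ∈ children T μ) (hcτ' : c <+: τ') : Incomparable τ τ' := by
  obtain ⟨hcT, hμc, hlen⟩ := mem_filter.1 hc
  exact (hτ.2.2 c hcT hμc fun h => by subst h; omega).of_prefix (List.prefix_refl τ) hcτ'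

end Region

section NormFormula

variable {𝕜 B : Type*} [RCLike 𝕜] [NormedAddCommGroup B] [NormedSpace 𝕜 B]
  {p : ℝ} {S : Set (List ℕ)} {φ : List ℕ → B} {T : Finset (List ℕ)}

/-- At a leaf of `T` the residual is `φ μ` itself; otherwise it is the limit of the sums of `φ`
over finite sets of children of `μ` in `S` that are not in `T`. -/
theorem residual_mem_closure_antichainSums (hsum : Summative S φ)
    (hT : IsPrefixClosed (T : Set (List ℕ))) (hTS : ↑T ⊆ S) {μ : List ℕ} (hμ : μ ∈ T) :
    residual φ T μ ∈ closure (antichainSums (residualRegion S T μ) φ) := by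
  rcases (children T μ).eq_empty_or_nonempty with hleaf | ⟨c, hc⟩
  · refine subset_closure ?_
    rw [residual, hleaf, sum_empty, sub_zero]
    refine mem_antichainSums_of_mem φ ⟨hTS hμ, List.prefix_refl μ, fun σ hσ hμσ hne => ?_⟩
    obtain ⟨c, hc, -⟩ := exists_mem_children_prefix hT hσ hμσ hne
    simp [hleaf] at hc
  obtain ⟨k, rfl⟩ := exists_eq_append_of_mem_children hc
  let child : {k // μ ++ [k] ∈ S} → List ℕ := fun k => μ ++ [k.1]
  have hinj : Function.Injective child := fun k k' h => Subtype.ext (by simpa [child] using h)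
  let K := (children T μ).preimage child hinj.injOn
  have hK : ∑ k ∈ K, φ (child k) = ∑ c ∈ children T μ, φ c := by
    refine sum_preimage child _ _ φ fun c hc hrange => (hrange ?_).elim
    obtain ⟨k, rfl⟩ := exists_eq_append_of_mem_children hc
    exact ⟨⟨k, hTS (mem_filter.1 hc).1⟩, rfl⟩
  have hlim := (hsum μ (hTS hμ) ⟨k, hTS (mem_filter.1 hc).1⟩).sub_sum_mem_closure K
  rw [hK] at hlim
  refine closure_mono ?_ hlim
  rintro _ ⟨t, ht, rfl⟩
  have hlen (k : {k // μ ++ [k] ∈ S}) : (child k).length = μ.length + 1 := by simp [child]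
  refine ⟨t.image child, ?_, ?_, (sum_image hinj.injOn).symm⟩
  · simp only [coe_image, Set.image_subset_iff]
    intro k hk
    have hkT : child k ∉ T := fun h =>
      Finset.disjoint_left.1 ht hk (mem_preimage.2 (append_mem_children.2 h))
    refine ⟨k.2, ⟨[k.1], rfl⟩, fun σ hσ hμσ hne => ?_⟩
    obtain ⟨c, hc, hcσ⟩ := exists_mem_children_prefix hT hσ hμσ hne
    have hne' : child k ≠ c := fun h => hkT (h ▸ (mem_filter.1 hc).1)
    refine (incomparable_of_length_eq ?_ hne').of_prefix (List.prefix_refl _) hcσ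
    rw [hlen, (mem_filter.1 hc).2.2]
  · simp only [coe_image]
    rintro _ ⟨k, -, rfl⟩ _ ⟨k', -, rfl⟩ hne
    exact incomparable_of_length_eq (by rw [hlen, hlen]) hne

theorem norm_rpow_residual (hp : 0 ≤ p) (hsum : Summative S φ)
    (hφ : FormallySeparating (𝕜 := 𝕜) p S φ) (hT : IsPrefixClosed (T : Set (List ℕ)))
    (hTS : ↑T ⊆ S) {μ : List ℕ} (hμ : μ ∈ T) :
    ‖residual φ T μ‖ ^ p = ‖φ μ‖ ^ p - ∑ c ∈ children T μ, ‖φ c‖ ^ p := by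
  let D : Option (children T μ) → Set (List ℕ) :=
    fun o => o.elim (residualRegion S T μ) fun c => {τ ∈ S | c.1 <+: τ}
  let w : Option (children T μ) → B := fun o => o.elim (residual φ T μ) fun c => φ c
  have key := hφ.norm_rpow_sum_smul_of_mem_closure hp (D := D) (w := w) ?_ ?_ ?_ fun _ => 1
  · simp only [one_smul, norm_one, Real.one_rpow, one_mul, Fintype.sum_option] at key
    have hdecomp : w none + ∑ c : children T μ, w (some c) = φ μ :=
      (congrArg _ (sum_coe_sort _ φ)).trans (sub_add_cancel _ _)
    have hnorms : ‖w none‖ ^ p + ∑ c : children T μ, ‖w (some c)‖ ^ p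
        = ‖residual φ T μ‖ ^ p + ∑ c ∈ children T μ, ‖φ c‖ ^ p :=
      congrArg _ (sum_coe_sort _ fun c => ‖φ c‖ ^ p)
    rw [hdecomp, hnorms] at key
    rw [key, add_sub_cancel_right]
  · rintro (_ | c) τ hτ
    exacts [hτ.1, hτ.1]
  · rintro (_ | c) (_ | c') hne τ hτ τ' hτ'
    · exact (hne rfl).elim
    · exact incomparable_of_mem_residualRegion_of_mem_children hτ c'.2 hτ'.2
    · exact (incomparable_of_mem_residualRegion_of_mem_children hτ' c.2 hτ.2).symm
    · exact (incomparable_of_mem_children c.2 c'.2 fun h => hne (by rw [Subtype.ext h])).of_prefix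
        hτ.2 hτ'.2
  · rintro (_ | c)
    · exact residual_mem_closure_antichainSums hsum hT hTS hμ
    · exact subset_closure
        (mem_antichainSums_of_mem φ ⟨hTS (mem_filter.1 c.2).1, List.prefix_refl _⟩)

theorem norm_rpow_sum_smul_eq (hp : 0 ≤ p) (hsum : Summative S φ)
    (hφ : FormallySeparating (𝕜 := 𝕜) p S φ) (hT : IsPrefixClosed (T : Set (List ℕ)))
    (hTS : ↑T ⊆ S) {ι : Type*} (s : Finset ι) (g : ι → List ℕ) (hgT : ∀ i ∈ s, g i ∈ T)
    (a : ι → 𝕜) :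
    ‖∑ i ∈ s, a i • φ (g i)‖ ^ p = ∑ μ ∈ T, ‖∑ i ∈ s with g i <+: μ, a i‖ ^ p *
      (‖φ μ‖ ^ p - ∑ c ∈ children T μ, ‖φ c‖ ^ p) := by
  let α (μ : List ℕ) : 𝕜 := ∑ i ∈ s with g i <+: μ, a i
  have key := hφ.norm_rpow_sum_smul_of_mem_closure hp (D := fun μ : T => residualRegion S T μ)
    (w := fun μ : T => residual φ T μ) (fun _ _ h => h.1)
    (fun μ μ' hne _ hτ _ hτ' =>
      incomparable_of_mem_residualRegion μ.2 μ'.2 (fun h => hne (Subtype.ext h)) hτ hτ')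
    (fun μ => residual_mem_closure_antichainSums hsum hT hTS μ.2) (fun μ => α μ)
  rw [sum_coe_sort T fun μ => α μ • residual φ T μ,
    sum_coe_sort T fun μ => ‖α μ‖ ^ p * ‖residual φ T μ‖ ^ p] at key
  rw [sum_smul_eq_sum_smul_residual s g a hT hgT φ, key]
  exact sum_congr rfl fun μ hμ => by rw [norm_rpow_residual hp hsum hφ hT hTS hμ]

end NormFormula

structure IsTreeIso (S₀ S₁ : Set (List ℕ)) (f : List ℕ → List ℕ) : Prop where
  mapsTo : Set.MapsTo f S₀ S₁
  surjOn : Set.SurjOn f S₀ S₁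
  prefix_iff : ∀ ν ∈ S₀, ∀ μ ∈ S₀, ν <+: μ ↔ f ν <+: f μ

namespace IsTreeIso

variable {S₀ S₁ : Set (List ℕ)} {f : List ℕ → List ℕ}

theorem injOn (hf : IsTreeIso S₀ S₁ f) : Set.InjOn f S₀ := fun ν hν μ hμ h => by
  have h₁ := (hf.prefix_iff ν hν μ hμ).2 (h ▸ List.prefix_refl _)
  have h₂ := (hf.prefix_iff μ hμ ν hν).2 (h ▸ List.prefix_refl _)
  exact h₁.eq_of_length (le_antisymm h₁.length_le h₂.length_le)

theorem image_prefixes (hf : IsTreeIso S₀ S₁ f) (hS₀ : IsTree S₀) (hS₁ : IsTree S₁) {ν : List ℕ}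
    (hν : ν ∈ S₀) : (prefixes ν).image f = prefixes (f ν) := by
  ext τ
  simp only [mem_image, mem_prefixes]
  constructor
  · rintro ⟨ρ, hρ, rfl⟩
    exact (hf.prefix_iff ρ (hS₀.2 ν hν ρ hρ) ν hν).1 hρ
  · intro hτ
    obtain ⟨ρ, hρ, rfl⟩ := hf.surjOn (hS₁.2 _ (hf.mapsTo hν) τ hτ)
    exact ⟨ρ, (hf.prefix_iff ρ hρ ν hν).2 hτ, rfl⟩

/-- The depth of a node is its number of proper ancestors, which a tree isomorphism preserves. -/
theorem length_eq (hf : IsTreeIso S₀ S₁ f) (hS₀ : IsTree S₀) (hS₁ : IsTree S₁) {ν : List ℕ}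
    (hν : ν ∈ S₀) : (f ν).length = ν.length := by
  have hcard := congrArg card (hf.image_prefixes hS₀ hS₁ hν)
  rw [card_image_of_injOn (hf.injOn.mono fun ρ hρ => hS₀.2 ν hν ρ (mem_prefixes.1 hρ)),
    card_prefixes, card_prefixes] at hcard
  omega

theorem isPrefixClosed_image (hf : IsTreeIso S₀ S₁ f) (hS₁ : IsTree S₁) {T : Finset (List ℕ)}
    (hT : IsPrefixClosed (T : Set (List ℕ))) (hTS : ↑T ⊆ S₀) :
    IsPrefixClosed (T.image f : Set (List ℕ)) := by
  rintro _ hτ ρ hρ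
  obtain ⟨μ, hμ, rfl⟩ := mem_image.1 hτ
  obtain ⟨ρ, hρS, rfl⟩ := hf.surjOn (hS₁.2 _ (hf.mapsTo (hTS hμ)) _ hρ)
  exact mem_image_of_mem f (hT μ hμ ρ ((hf.prefix_iff ρ hρS μ (hTS hμ)).2 hρ))

theorem children_image (hf : IsTreeIso S₀ S₁ f) (hS₀ : IsTree S₀) (hS₁ : IsTree S₁)
    {T : Finset (List ℕ)} (hTS : ↑T ⊆ S₀) {μ : List ℕ} (hμ : μ ∈ S₀) :
    children (T.image f) (f μ) = (children T μ).image f := by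
  rw [children, children, filter_image]
  refine congrArg _ (filter_congr fun c hc => ?_)
  rw [hf.length_eq hS₀ hS₁ hμ, hf.length_eq hS₀ hS₁ (hTS hc), hf.prefix_iff μ hμ c (hTS hc)]

theorem norm_sum_smul_comp_eq {𝕜 B₀ B₁ : Type*} [RCLike 𝕜]
    [NormedAddCommGroup B₀] [NormedSpace 𝕜 B₀] [NormedAddCommGroup B₁] [NormedSpace 𝕜 B₁]
    {p : ℝ} (hp : 0 < p) {φ₀ : List ℕ → B₀} {φ₁ : List ℕ → B₁}
    (hf : IsTreeIso S₀ S₁ f) (hS₀ : IsTree S₀) (hS₁ : IsTree S₁)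
    (hsum₀ : Summative S₀ φ₀) (hsum₁ : Summative S₁ φ₁)
    (hφ₀ : FormallySeparating (𝕜 := 𝕜) p S₀ φ₀) (hφ₁ : FormallySeparating (𝕜 := 𝕜) p S₁ φ₁)
    (hf_norm : ∀ ν ∈ S₀, ‖φ₁ (f ν)‖ = ‖φ₀ ν‖)
    {ι : Type*} (s : Finset ι) (g : ι → List ℕ) (hg : ∀ i ∈ s, g i ∈ S₀) (a : ι → 𝕜) :
    ‖∑ i ∈ s, a i • φ₁ (f (g i))‖ = ‖∑ i ∈ s, a i • φ₀ (g i)‖ := by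
  let T := prefixClosure (s.image g)
  have hT : IsPrefixClosed (T : Set (List ℕ)) := isPrefixClosed_prefixClosure _
  have hTS : ↑T ⊆ S₀ := prefixClosure_subset hS₀.2 fun ν hν => by
    obtain ⟨i, hi, rfl⟩ := mem_image.1 hν
    exact hg i hi
  have hgT (i : ι) (hi : i ∈ s) : g i ∈ T := subset_prefixClosure _ (mem_image_of_mem g hi)
  have hinj : Set.InjOn f T := hf.injOn.mono hTS
  refine (Real.rpow_left_inj (norm_nonneg _) (norm_nonneg _) hp.ne').1 ?_
  rw [norm_rpow_sum_smul_eq hp.le hsum₁ hφ₁ (hf.isPrefixClosed_image hS₁ hT hTS)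
      (fun τ hτ => by obtain ⟨μ, hμ, rfl⟩ := mem_image.1 hτ; exact hf.mapsTo (hTS hμ))
      s (fun i => f (g i)) (fun i hi => mem_image_of_mem f (hgT i hi)) a,
    norm_rpow_sum_smul_eq hp.le hsum₀ hφ₀ hT hTS s g hgT a, sum_image hinj]
  refine sum_congr rfl fun μ hμ => ?_
  have hμS := hTS hμ
  have hcoeff : (s.filter fun i => f (g i) <+: f μ) = s.filter fun i => g i <+: μ :=
    filter_congr fun i hi => (hf.prefix_iff _ (hg i hi) μ hμS).symm
  have hchildren : ∑ c ∈ children T μ, ‖φ₁ (f c)‖ ^ p = ∑ c ∈ children T μ, ‖φ₀ c‖ ^ p :=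
    sum_congr rfl fun c hc => by rw [hf_norm c (hTS (mem_filter.1 hc).1)]
  rw [hf.children_image hS₀ hS₁ hTS hμS, sum_image (s := children T μ)
    (hinj.mono (filter_subset _ _)), hf_norm μ hμS, hcoeff, hchildren]

end IsTreeIso

end FormalDisintegration

open FormalDisintegration

theorem Finsupp.denseRange_linearCombination {R M ι : Type*} [Semiring R] [TopologicalSpace M]
    [AddCommMonoid M] [Module R M] [ContinuousConstSMul R M] [ContinuousAdd M] {v : ι → M}
    (hv : (Submodule.span R (Set.range v)).topologicalClosure = ⊤) :
    DenseRange (Finsupp.linearCombination R v) := by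
  rw [DenseRange, ← LinearMap.coe_range, Finsupp.range_linearCombination]
  exact Submodule.dense_iff_topologicalClosure_eq_top.2 hv

theorem LinearIsometryEquiv.existsUnique_of_norm_linearCombination_eq {𝕜 ι E F : Type*}
    [NormedField 𝕜] [NormedAddCommGroup E] [NormedSpace 𝕜 E] [CompleteSpace E]
    [NormedAddCommGroup F] [NormedSpace 𝕜 F] [CompleteSpace F] {u : ι → E} {v : ι → F}
    (hu : (Submodule.span 𝕜 (Set.range u)).topologicalClosure = ⊤)
    (hv : (Submodule.span 𝕜 (Set.range v)).topologicalClosure = ⊤)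
    (h : ∀ c : ι →₀ 𝕜, ‖Finsupp.linearCombination 𝕜 v c‖ = ‖Finsupp.linearCombination 𝕜 u c‖) :
    ∃! T : E ≃ₗᵢ[𝕜] F, ∀ i, T (u i) = v i := by
  have hdu := Finsupp.denseRange_linearCombination hu
  have hdv := Finsupp.denseRange_linearCombination hv
  let T := (LinearEquiv.refl 𝕜 (ι →₀ 𝕜)).extendOfIsometry _ _ hdu hdv h
  have hT (i : ι) : T (u i) = v i := by
    have := (LinearEquiv.refl 𝕜 (ι →₀ 𝕜)).extendOfIsometry_eq (Finsupp.linearCombination 𝕜 u)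
      (Finsupp.linearCombination 𝕜 v) hdu hdv h (Finsupp.single i 1)
    rwa [LinearEquiv.refl_apply, Finsupp.linearCombination_single, one_smul,
      Finsupp.linearCombination_single, one_smul] at this
  refine ⟨T, hT, fun T' hT' => ?_⟩
  have := ContinuousLinearMap.ext_on (Submodule.dense_iff_topologicalClosure_eq_top.2 hu)
    (f := T'.toLinearIsometry.toContinuousLinearMap) (g := T.toLinearIsometry.toContinuousLinearMap)
    (by rintro _ ⟨i, rfl⟩; exact (hT' i).trans (hT i).symm)
  exact LinearIsometryEquiv.ext fun x => DFunLike.congr_fun this x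

/-- an isomorphism of `L^p`-formal disintegrations induces a unique
isometric isomorphism of the underlying Banach spaces. -/
theorem stmt2 {𝕜 : Type*} [RCLike 𝕜] {B₀ B₁ : Type*}
    [NormedAddCommGroup B₀] [NormedSpace 𝕜 B₀] [CompleteSpace B₀]
    [NormedAddCommGroup B₁] [NormedSpace 𝕜 B₁] [CompleteSpace B₁]
    (p : ℝ) (hp : 1 ≤ p)
    (S₀ S₁ : Set (List ℕ)) (φ₀ : List ℕ → B₀) (φ₁ : List ℕ → B₁)
    (h₀ : IsFormalDisintegration 𝕜 p S₀ φ₀)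
    (h₁ : IsFormalDisintegration 𝕜 p S₁ φ₁)
    (f : List ℕ → List ℕ)
    (hf_maps : ∀ ν ∈ S₀, f ν ∈ S₁)
    (hf_surj : ∀ τ ∈ S₁, ∃ ν ∈ S₀, f ν = τ)
    (hf_ord : ∀ ν ∈ S₀, ∀ μ ∈ S₀, (ν <+: μ ↔ f ν <+: f μ))
    (hf_norm : ∀ ν ∈ S₀, ‖φ₁ (f ν)‖ = ‖φ₀ ν‖) :
    ∃! T : B₀ ≃ₗᵢ[𝕜] B₁, ∀ ν ∈ S₀, T (φ₀ ν) = φ₁ (f ν) := by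
  obtain ⟨hS₀, hsum₀, hφ₀, -, hdense₀⟩ := h₀
  obtain ⟨hS₁, hsum₁, hφ₁, -, hdense₁⟩ := h₁
  have hf : IsTreeIso S₀ S₁ f := ⟨hf_maps, hf_surj, hf_ord⟩
  have hrange : Set.range (fun ν : S₀ => φ₁ (f ν)) = φ₁ '' S₁ := by
    rw [← hf.surjOn.image_eq_of_mapsTo hf.mapsTo, ← Set.image_comp, Set.image_eq_range]
    rfl
  obtain ⟨T, hT, huniq⟩ := LinearIsometryEquiv.existsUnique_of_norm_linearCombination_eq
    (u := fun ν : S₀ => φ₀ ν) (v := fun ν : S₀ => φ₁ (f ν))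
    (by rwa [← Set.image_eq_range]) (by rwa [hrange]) fun c => by
      simp only [Finsupp.linearCombination_apply, Finsupp.sum]
      exact hf.norm_sum_smul_comp_eq (zero_lt_one.trans_le hp) hS₀ hS₁ hsum₀ hsum₁ hφ₀ hφ₁
        hf_norm c.support Subtype.val (fun ν _ => ν.2) c
  exact ⟨T, fun ν hν => hT ⟨ν, hν⟩, fun T' hT' => huniq T' fun ν => hT' ν ν.2⟩
end

section
/- If f₀, f₁ ∈ L^p(Ω; 𝔽), then there exist disjointly supported g₀, g₁ ∈ L^p(Ω; 𝔽) such that max{‖g₀ - f₀‖_p, ‖g₁ - f₁‖_p} ≤ ‖min(|f₀|, |f₁|)‖_p. -/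
/-!
Cut the pair along `s = {‖f₁‖ < ‖f₀‖}`: keep `f₀` on `s` and `f₁` off `s`. Where a function is
replaced by `0`, its modulus is the smaller of the two, so both errors are pointwise bounded by
`min ‖f₀‖ ‖f₁‖`. The set `s` is only null measurable, which is enough for the cut functions to
stay in `L^p`.
-/

open MeasureTheory

section

variable {X E : Type*} [NormedAddCommGroup E]

theorem norm_indicator_sub_le_min {f g : X → E} {s : Set X}
    (hle : ∀ x ∉ s, ‖f x‖ ≤ ‖g x‖) (x : X) :
    ‖s.indicator f x - f x‖ ≤ min ‖f x‖ ‖g x‖ := by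
  by_cases hx : x ∈ s
  · simp [hx]
  · simpa [hx] using hle x hx

variable [MeasurableSpace X] {μ : Measure X} {p : ENNReal}

theorem MeasureTheory.MemLp.indicator₀ {f : X → E} {s : Set X}
    (hs : NullMeasurableSet s μ) (hf : MemLp f p μ) : MemLp (s.indicator f) p μ :=
  hf.of_le (hf.1.indicator₀ hs) (ae_of_all _ (norm_indicator_le_norm_self f))

theorem eLpNorm_indicator_sub_le_min {f g : X → E} {s : Set X}
    (hle : ∀ x ∉ s, ‖f x‖ ≤ ‖g x‖) :
    eLpNorm (s.indicator f - f) p μ ≤ eLpNorm (fun x => min ‖f x‖ ‖g x‖) p μ :=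
  eLpNorm_mono_real (norm_indicator_sub_le_min hle)

end

theorem stmt3_general {X : Type*} [MeasurableSpace X] (μ : Measure X)
    {𝕜 : Type*} [RCLike 𝕜] (p : ℝ)
    (f₀ f₁ : X → 𝕜)
    (hf₀ : MemLp f₀ (ENNReal.ofReal p) μ) (hf₁ : MemLp f₁ (ENNReal.ofReal p) μ) :
    ∃ g₀ g₁ : X → 𝕜,
      MemLp g₀ (ENNReal.ofReal p) μ ∧ MemLp g₁ (ENNReal.ofReal p) μ ∧
      (∀ᵐ t ∂μ, g₀ t * g₁ t = 0) ∧
      max (eLpNorm (g₀ - f₀) (ENNReal.ofReal p) μ)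
          (eLpNorm (g₁ - f₁) (ENNReal.ofReal p) μ)
        ≤ eLpNorm (fun t => min ‖f₀ t‖ ‖f₁ t‖) (ENNReal.ofReal p) μ := by
  set s := {x | ‖f₁ x‖ < ‖f₀ x‖}
  have hs : NullMeasurableSet s μ := hf₁.1.norm.nullMeasurableSet_lt hf₀.1.norm
  refine ⟨s.indicator f₀, sᶜ.indicator f₁, hf₀.indicator₀ hs, hf₁.indicator₀ hs.compl,
    ae_of_all _ fun x => ?_, max_le ?_ ?_⟩
  · rw [← Set.inter_indicator_mul, Set.inter_compl_self, Set.indicator_empty]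
  · exact eLpNorm_indicator_sub_le_min fun _ hx => not_lt.mp hx
  · simp_rw [min_comm ‖f₀ _‖]
    exact eLpNorm_indicator_sub_le_min fun x hx => (not_not.mp hx).le

/-- any two `L^p` functions can be approximated by disjointly
supported ones, with error controlled by the norm of the pointwise minimum of
their moduli. -/
theorem stmt3 {X : Type*} [MeasurableSpace X] (μ : Measure X)
    {𝕜 : Type*} [RCLike 𝕜] (p : ℝ) (hp : 1 ≤ p)
    (f₀ f₁ : X → 𝕜)
    (hf₀ : MemLp f₀ (ENNReal.ofReal p) μ) (hf₁ : MemLp f₁ (ENNReal.ofReal p) μ) :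
    ∃ g₀ g₁ : X → 𝕜,
      MemLp g₀ (ENNReal.ofReal p) μ ∧ MemLp g₁ (ENNReal.ofReal p) μ ∧
      (∀ᵐ t ∂μ, g₀ t * g₁ t = 0) ∧
      max (eLpNorm (g₀ - f₀) (ENNReal.ofReal p) μ)
          (eLpNorm (g₁ - f₁) (ENNReal.ofReal p) μ)
        ≤ eLpNorm (fun t => min ‖f₀ t‖ ‖f₁ t‖) (ENNReal.ofReal p) μ :=
  stmt3_general μ p f₀ f₁ hf₀ hf₁
end

section
/- Let ℬ be a Banach lattice and ‖·‖ a norm on its complexification ℬ_ℂ. Then (ℬ_ℂ, ‖·‖) is an abstract complex L^p space if and only if for all v₀, v₁ ∈ ℬ and all complex α, β: inf over u₀, u₁ ∈ ℬ of max{ G₀, G₁, G₂ } = 0, where G₀ = max(0, max{‖v₀-u₀‖_ℬ, ‖v₁-u₁‖_ℬ} - ‖|v₀| ∧ |v₁|‖_ℬ), G₁ = |‖α(u₀+i0)+β(u₁+i0)‖^p - |α|^p‖u₀‖_ℬ^p - |β|^p‖u₁‖_ℬ^p|, and G₂ = |‖v₀+i0‖ - ‖v₀‖_ℬ|. -/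
/-!
For the forward direction, soft thresholding `v ↦ (v⁺ - d)⁺ - (v⁻ - d)⁺` at the level
`d = |v₀| ⊓ |v₁|` moves `v₀` and `v₁` by at most `‖d‖` (the norm is solid) and makes them
disjoint, so the complex `L^p` identity drives all three terms to `0` at once.
Conversely, `G₂` does not depend on `u`, so it vanishes; and for disjoint `v₀, v₁` the
infimum condition produces `u → (v₀, v₁)` along which `G₁ → 0`, so `G₁ (v₀, v₁) = 0` since
`G₁` is continuous once `j` is an isometry and `0 ≤ p`.
-/

section LatticeOrderedGroup

variable {α : Type*} [Lattice α] [AddCommGroup α] [IsOrderedAddMonoid α]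

lemma abs_sub_le_of_nonneg_of_le' {a b n : α} (ha : 0 ≤ a) (han : a ≤ n) (hb : 0 ≤ b)
    (hbn : b ≤ n) : |a - b| ≤ n :=
  abs_le'.2 ⟨(sub_le_self a hb).trans han, by rw [neg_sub]; exact (sub_le_self b ha).trans hbn⟩

def softThreshold (d v : α) : α := (v⁺ - d)⁺ - (v⁻ - d)⁺

lemma sub_softThreshold (d v : α) : v - softThreshold d v = v⁺ ⊓ d - v⁻ ⊓ d := by
  rw [inf_eq_sub_posPart_sub, inf_eq_sub_posPart_sub, softThreshold]
  nth_rewrite 1 [← posPart_sub_negPart v]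
  abel

lemma abs_sub_softThreshold_le {d : α} (hd : 0 ≤ d) (v : α) : |v - softThreshold d v| ≤ d := by
  rw [sub_softThreshold]
  exact abs_sub_le_of_nonneg_of_le' (le_inf (posPart_nonneg v) hd) inf_le_right
    (le_inf (negPart_nonneg v) hd) inf_le_right

lemma abs_softThreshold_le {d v : α} (hv : d ≤ |v|) : |softThreshold d v| ≤ |v| - d := by
  have hpos : (v⁺ - d)⁺ ≤ |v| - d := by
    rw [posPart_def, ← posPart_add_negPart v]
    exact sup_le (sub_le_sub_right (le_add_of_nonneg_right (negPart_nonneg v)) d)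
      (sub_nonneg.2 (hv.trans_eq (posPart_add_negPart v).symm))
  have hneg : (v⁻ - d)⁺ ≤ |v| - d := by
    rw [posPart_def, ← posPart_add_negPart v]
    exact sup_le (sub_le_sub_right (le_add_of_nonneg_left (posPart_nonneg v)) d)
      (sub_nonneg.2 (hv.trans_eq (posPart_add_negPart v).symm))
  exact abs_sub_le_of_nonneg_of_le' (posPart_nonneg _) hpos (posPart_nonneg _) hneg

lemma abs_softThreshold_inf_abs_softThreshold (v w : α) :
    |softThreshold (|v| ⊓ |w|) v| ⊓ |softThreshold (|v| ⊓ |w|) w| = 0 := by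
  refine le_antisymm ?_ (le_inf (abs_nonneg _) (abs_nonneg _))
  calc |softThreshold (|v| ⊓ |w|) v| ⊓ |softThreshold (|v| ⊓ |w|) w|
      ≤ (|v| - |v| ⊓ |w|) ⊓ (|w| - |v| ⊓ |w|) :=
        inf_le_inf (abs_softThreshold_le inf_le_left) (abs_softThreshold_le inf_le_right)
    _ = 0 := by rw [← inf_sub, sub_self]

end LatticeOrderedGroup

lemma norm_sub_softThreshold_le {B : Type*} [NormedAddCommGroup B] [Lattice B] [HasSolidNorm B]
    [IsOrderedAddMonoid B] {d : B} (hd : 0 ≤ d) (v : B) : ‖v - softThreshold d v‖ ≤ ‖d‖ :=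
  HasSolidNorm.solid <| (abs_sub_softThreshold_le hd v).trans_eq (abs_of_nonneg hd).symm

lemma eq_zero_of_forall_exists_dist_lt {X : Type*} [PseudoMetricSpace X] {F : X → ℝ} {x : X}
    (hF : ContinuousAt F x) (h : ∀ ε > 0, ∃ y, dist x y < ε ∧ |F y| < ε) : F x = 0 := by
  by_contra hx
  have hε : 0 < |F x| / 2 := by positivity
  obtain ⟨δ, hδ, hFδ⟩ := Metric.continuousAt_iff.1 hF _ hε
  obtain ⟨y, hxy, hy⟩ := h (min δ (|F x| / 2)) (lt_min hδ hε)
  have hFy : |F y - F x| < |F x| / 2 :=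
    hFδ ((dist_comm y x).trans_lt (hxy.trans_le (min_le_left _ _)))
  linarith [abs_sub_abs_le_abs_sub (F x) (F y), abs_sub_comm (F y) (F x), min_le_right δ (|F x| / 2)]

noncomputable section LpGap

variable {B E : Type*} [NormedAddCommGroup B] [NormedAddCommGroup E] [NormedSpace ℂ E]

/-- `G₁` of the characterization. -/
def lpDefect (p : ℝ) (j : B → E) (α β : ℂ) (u : B × B) : ℝ :=
  |‖α • j u.1 + β • j u.2‖ ^ p - ‖α‖ ^ p * ‖u.1‖ ^ p - ‖β‖ ^ p * ‖u.2‖ ^ p|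

variable {p : ℝ} {j : B → E} {α β : ℂ}

lemma continuous_lpDefect (hp : 0 ≤ p) (hj : Continuous j) : Continuous (lpDefect p j α β) := by
  have hrpow : Continuous fun t : ℝ => t ^ p := Real.continuous_rpow_const hp
  unfold lpDefect
  fun_prop

variable [Lattice B] {v₀ v₁ : B}

/-- `max {G₀, G₁, G₂}` of the characterization. -/
def lpGap (p : ℝ) (j : B → E) (v₀ v₁ : B) (α β : ℂ) (u : B × B) : ℝ :=
  max (max 0 (max ‖v₀ - u.1‖ ‖v₁ - u.2‖ - ‖|v₀| ⊓ |v₁|‖)) (max (lpDefect p j α β u) |‖j v₀‖ - ‖v₀‖|)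

lemma lpGap_nonneg (u : B × B) : 0 ≤ lpGap p j v₀ v₁ α β u :=
  le_max_of_le_left (le_max_left _ _)

lemma lpDefect_le_lpGap (u : B × B) : lpDefect p j α β u ≤ lpGap p j v₀ v₁ α β u :=
  le_max_of_le_right (le_max_left _ _)

lemma abs_norm_sub_norm_le_lpGap (u : B × B) : |‖j v₀‖ - ‖v₀‖| ≤ lpGap p j v₀ v₁ α β u :=
  le_max_of_le_right (le_max_right _ _)

lemma dist_le_lpGap (h : |v₀| ⊓ |v₁| = 0) (u : B × B) : dist (v₀, v₁) u ≤ lpGap p j v₀ v₁ α β u := by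
  refine le_max_of_le_left (le_max_of_le_right ?_)
  rw [h, norm_zero, sub_zero, Prod.dist_eq, dist_eq_norm, dist_eq_norm]

lemma iInf_lpGap_eq_zero_of_lpGap_eq_zero {u : B × B} (hu : lpGap p j v₀ v₁ α β u = 0) :
    ⨅ u, lpGap p j v₀ v₁ α β u = 0 :=
  le_antisymm ((ciInf_le ⟨0, Set.forall_mem_range.2 lpGap_nonneg⟩ u).trans_eq hu)
    (le_ciInf lpGap_nonneg)

lemma le_of_iInf_lpGap_eq_zero {c : ℝ} (h : ⨅ u, lpGap p j v₀ v₁ α β u = 0)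
    (hc : ∀ u, c ≤ lpGap p j v₀ v₁ α β u) : c ≤ 0 :=
  h ▸ le_ciInf hc

lemma iInf_lpGap_eq_zero [IsOrderedAddMonoid B] [HasSolidNorm B] (hj : ∀ v, ‖j v‖ = ‖v‖)
    (hdisj : ∀ u₀ u₁ : B, |u₀| ⊓ |u₁| = 0 →
      ‖α • j u₀ + β • j u₁‖ ^ p = ‖α‖ ^ p * ‖u₀‖ ^ p + ‖β‖ ^ p * ‖u₁‖ ^ p) :
    ⨅ u, lpGap p j v₀ v₁ α β u = 0 := by
  set d := |v₀| ⊓ |v₁| with hd_def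
  have hd : 0 ≤ d := le_inf (abs_nonneg _) (abs_nonneg _)
  apply iInf_lpGap_eq_zero_of_lpGap_eq_zero (u := (softThreshold d v₀, softThreshold d v₁))
  have hG₀ : max ‖v₀ - softThreshold d v₀‖ ‖v₁ - softThreshold d v₁‖ - ‖d‖ ≤ 0 :=
    sub_nonpos.2 (max_le (norm_sub_softThreshold_le hd v₀) (norm_sub_softThreshold_le hd v₁))
  have hG₁ : lpDefect p j α β (softThreshold d v₀, softThreshold d v₁) = 0 := by
    rw [lpDefect, hdisj _ _ (abs_softThreshold_inf_abs_softThreshold v₀ v₁), add_sub_cancel_left,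
      sub_self, abs_zero]
  simp only [lpGap, ← hd_def, max_eq_left hG₀, hG₁, hj, sub_self, abs_zero, max_self]

lemma lpDefect_eq_zero_of_iInf_lpGap_eq_zero (hp : 0 ≤ p) (hj : Continuous j)
    (hdisj : |v₀| ⊓ |v₁| = 0) (h : ⨅ u, lpGap p j v₀ v₁ α β u = 0) :
    lpDefect p j α β (v₀, v₁) = 0 := by
  refine eq_zero_of_forall_exists_dist_lt (continuous_lpDefect hp hj).continuousAt fun ε hε => ?_
  obtain ⟨u, hu⟩ := exists_lt_of_ciInf_lt (h.trans_lt hε)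
  refine ⟨u, (dist_le_lpGap hdisj u).trans_lt hu, ?_⟩
  rw [lpDefect, abs_abs]
  exact (lpDefect_le_lpGap u).trans_lt hu

end LpGap

theorem stmt11_general (p : ℝ) (hp : 1 ≤ p)
    {B E : Type} [NormedAddCommGroup B] [Lattice B] [HasSolidNorm B] [IsOrderedAddMonoid B] [NormedSpace ℝ B]
    [NormedAddCommGroup E] [NormedSpace ℂ E]
    (j : B →ₗ[ℝ] E) :
    -- `(E, ‖·‖)` is an abstract complex `L^p` space ...
    ((∀ v : B, ‖j v‖ = ‖v‖) ∧
      ∀ v₀ v₁ : B, |v₀| ⊓ |v₁| = 0 → ∀ α β : ℂ,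
        ‖α • j v₀ + β • j v₁‖ ^ p = ‖α‖ ^ p * ‖v₀‖ ^ p + ‖β‖ ^ p * ‖v₁‖ ^ p)
    ↔
    -- ... iff for all `v₀, v₁, α, β` the infimum of `max {G₀, G₁, G₂}` is `0`
    (∀ v₀ v₁ : B, ∀ α β : ℂ,
      (⨅ u : B × B,
        max (max 0 (max ‖v₀ - u.1‖ ‖v₁ - u.2‖ - ‖|v₀| ⊓ |v₁|‖))
          (max
            |‖α • j u.1 + β • j u.2‖ ^ p - ‖α‖ ^ p * ‖u.1‖ ^ p - ‖β‖ ^ p * ‖u.2‖ ^ p|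
            |‖j v₀‖ - ‖v₀‖|)) = 0) := by
  constructor
  · rintro ⟨hj, hdisj⟩ v₀ v₁ α β
    exact iInf_lpGap_eq_zero hj fun u₀ u₁ h => hdisj u₀ u₁ h α β
  · intro h
    have hj : ∀ v : B, ‖j v‖ = ‖v‖ := fun v =>
      sub_eq_zero.1 <| abs_nonpos_iff.1 <|
        le_of_iInf_lpGap_eq_zero (h v v 1 1) abs_norm_sub_norm_le_lpGap
    refine ⟨hj, fun v₀ v₁ hdisj α β => ?_⟩
    have hcont : Continuous j := (AddMonoidHomClass.isometry_of_norm j hj).continuous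
    have hdefect := lpDefect_eq_zero_of_iInf_lpGap_eq_zero (by linarith) hcont hdisj (h v₀ v₁ α β)
    rw [lpDefect, abs_eq_zero] at hdefect
    linarith

/-- characterization of abstract complex `L^p` spaces by a
continuous-logic style condition.  `E` is the complexification of the abstract
real `L^p` space `B`, with `j v = v + i·0` the (linear) real embedding. -/
theorem stmt11 (p : ℝ) (hp : 1 ≤ p)
    {B E : Type} [NormedAddCommGroup B] [Lattice B] [HasSolidNorm B] [IsOrderedAddMonoid B] [NormedSpace ℝ B] [CompleteSpace B]
    -- `B` is an abstract real `L^p` space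
    (hB : ∀ x y : B, |x| ⊓ |y| = 0 → ‖x + y‖ ^ p = ‖x‖ ^ p + ‖y‖ ^ p)
    [NormedAddCommGroup E] [NormedSpace ℂ E] [CompleteSpace E]
    (j : B →ₗ[ℝ] E)
    (hcompl : ∀ w : E, ∃! vv : B × B, w = j vv.1 + Complex.I • j vv.2) :
    -- `(E, ‖·‖)` is an abstract complex `L^p` space ...
    ((∀ v : B, ‖j v‖ = ‖v‖) ∧
      ∀ v₀ v₁ : B, |v₀| ⊓ |v₁| = 0 → ∀ α β : ℂ,
        ‖α • j v₀ + β • j v₁‖ ^ p = ‖α‖ ^ p * ‖v₀‖ ^ p + ‖β‖ ^ p * ‖v₁‖ ^ p)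
    ↔
    -- ... iff for all `v₀, v₁, α, β` the infimum of `max {G₀, G₁, G₂}` is `0`
    (∀ v₀ v₁ : B, ∀ α β : ℂ,
      (⨅ u : B × B,
        max (max 0 (max ‖v₀ - u.1‖ ‖v₁ - u.2‖ - ‖|v₀| ⊓ |v₁|‖))
          (max
            |‖α • j u.1 + β • j u.2‖ ^ p - ‖α‖ ^ p * ‖u.1‖ ^ p - ‖β‖ ^ p * ‖u.2‖ ^ p|
            |‖j v₀‖ - ‖v₀‖|)) = 0) :=
  stmt11_general p hp j
end

section
/- Let 1 ≤ r < ∞ and suppose ℬ is a Banach space ( over ℝ) admitting an L^r-formal disintegration φ : {0,1}* → ℬ indexed by the full binary tree such that ‖φ(σ)‖ = 2^{-|σ|/r} for all σ. Then ℬ is isometrically isomorphic to L^r([0,1]; ℝ). -/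
/-!
Both `φ` and the indicators `ψ σ` of the dyadic intervals `I σ ⊆ [0, 1)` are summative, so a
finite combination `∑ a σ • φ σ` can be pushed down to a common depth `n` as
`∑_{|τ| = n} c τ • φ τ`, where `c τ` is the sum of `a σ` over the prefixes `σ` of `τ` and does
not depend on the family; the same holds for `ψ`. Words of equal length are pairwise
incomparable, so formal `L^r`-separation and `‖φ τ‖ = 2^{-n/r}` give
`‖∑ c τ • φ τ‖^r = 2^{-n} ∑ |c τ|^r`, and disjointness of the dyadic intervals gives the same
value for `ψ`. Hence `∑ a σ • φ σ ↦ ∑ a σ • ψ σ` is a well-defined isometry between dense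
subspaces, which extends to an isometric isomorphism because step functions on dyadic intervals
are dense in `L^r[0, 1]`.
-/

open MeasureTheory Finset

lemma Finset.apply_sum_indicator_of_pairwiseDisjoint {ι α M N : Type*} [AddCommMonoid M]
    [AddCommMonoid N] {s : ι → Set α} {S : Finset ι} (hS : (S : Set ι).PairwiseDisjoint s)
    (f : ι → α → M) (g : M → N) (hg : g 0 = 0) (x : α) :
    g (∑ i ∈ S, (s i).indicator (f i) x) = ∑ i ∈ S, (s i).indicator (g ∘ f i) x := by
  by_cases hx : ∃ j ∈ S, x ∈ s j
  · obtain ⟨j, hj, hxj⟩ := hx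
    have hother : ∀ i ∈ S, i ≠ j → x ∉ s i := fun i hi hij hxi =>
      Set.disjoint_left.1 (hS hi hj hij) hxi hxj
    rw [sum_eq_single_of_mem j hj fun i hi hij => Set.indicator_of_notMem (hother i hi hij) _,
      sum_eq_single_of_mem j hj fun i hi hij => Set.indicator_of_notMem (hother i hi hij) _,
      Set.indicator_of_mem hxj, Set.indicator_of_mem hxj, Function.comp_apply]
  · push Not at hx
    rw [sum_eq_zero fun i hi => Set.indicator_of_notMem (hx i hi) _,
      sum_eq_zero fun i hi => Set.indicator_of_notMem (hx i hi) _, hg]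

section DisjointIndicators

variable {ι α : Type*} [MeasurableSpace α] {μ : Measure α} {p : ENNReal}
  {s : ι → Set α} (hs : ∀ i, MeasurableSet (s i)) (hμs : ∀ i, μ (s i) ≠ ⊤)

lemma coeFn_sum_smul_indicatorConstLp (S : Finset ι) (c : ι → ℝ) :
    ⇑(∑ i ∈ S, c i • indicatorConstLp p (hs i) (hμs i) (1 : ℝ)) =ᵐ[μ]
      fun x => ∑ i ∈ S, (s i).indicator (fun _ => c i) x := by
  classical
  induction S using Finset.induction_on with
  | empty =>
    simp only [sum_empty]
    exact Lp.coeFn_zero ℝ p μ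
  | insert j S hj ih =>
    rw [sum_insert hj]
    filter_upwards [Lp.coeFn_add (c j • indicatorConstLp p (hs j) (hμs j) (1 : ℝ)) _, ih,
      Lp.coeFn_smul (c j) (indicatorConstLp p (hs j) (hμs j) (1 : ℝ)),
      indicatorConstLp_coeFn (p := p) (hs := hs j) (hμs := hμs j) (c := (1 : ℝ))]
      with x hadd hS hsmul hind
    rw [hadd, Pi.add_apply, hS, hsmul, Pi.smul_apply, hind, sum_insert hj, smul_eq_mul]
    by_cases hxj : x ∈ s j <;> simp [hxj]

lemma norm_sum_smul_indicatorConstLp_rpow (hp₀ : p ≠ 0) (hp : p ≠ ⊤) {S : Finset ι}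
    (hS : (S : Set ι).PairwiseDisjoint s) (c : ι → ℝ) :
    ‖∑ i ∈ S, c i • indicatorConstLp p (hs i) (hμs i) (1 : ℝ)‖ ^ p.toReal =
      ∑ i ∈ S, |c i| ^ p.toReal * μ.real (s i) := by
  have hq : 0 < p.toReal := ENNReal.toReal_pos hp₀ hp
  have hint : ∫⁻ x, ‖∑ i ∈ S, (s i).indicator (fun _ => c i) x‖ₑ ^ p.toReal ∂μ =
      ∑ i ∈ S, ‖c i‖ₑ ^ p.toReal * μ (s i) := by
    simp_rw [S.apply_sum_indicator_of_pairwiseDisjoint hS _ (fun y : ℝ => ‖y‖ₑ ^ p.toReal)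
      (by simp [hq]), Function.comp_def]
    rw [lintegral_finsetSum _ fun i _ => measurable_const.indicator (hs i)]
    exact sum_congr rfl fun i _ => lintegral_indicator_const (hs i) _
  rw [Lp.norm_def, eLpNorm_congr_ae (coeFn_sum_smul_indicatorConstLp hs hμs S c),
    eLpNorm_eq_lintegral_rpow_enorm_toReal hp₀ hp, hint, ENNReal.toReal_rpow,
    ← ENNReal.rpow_mul, one_div_mul_cancel hq.ne', ENNReal.rpow_one,
    ENNReal.toReal_sum fun i _ => ENNReal.mul_ne_top (by simp [hq.le]) (hμs i)]
  simp [Measure.real, ← ENNReal.toReal_rpow]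

end DisjointIndicators

lemma Finsupp.denseRange_linearCombination_iff {ι R E : Type*} [Semiring R] [AddCommMonoid E]
    [Module R E] [TopologicalSpace E] {v : ι → E} :
    DenseRange (Finsupp.linearCombination R v) ↔
      Dense (Submodule.span R (Set.range v) : Set E) := by
  rw [DenseRange, ← Finsupp.range_linearCombination, LinearMap.coe_range]

namespace BinaryTree

def level (n : ℕ) : Finset (List Bool) :=
  (univ : Finset (Fin n → Bool)).image List.ofFn

@[simp]
lemma mem_level {n : ℕ} {τ : List Bool} : τ ∈ level n ↔ τ.length = n := by
  simp only [level, mem_image, mem_univ, true_and]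
  constructor
  · rintro ⟨v, rfl⟩
    exact List.length_ofFn
  · rintro rfl
    exact ⟨fun i => τ[(i : ℕ)], List.ofFn_getElem⟩

lemma level_one : level 1 = {[false], [true]} := by decide

lemma sum_level_add {M : Type*} [AddCommMonoid M] (g : List Bool → M) (m k : ℕ) :
    ∑ τ ∈ level (m + k), g τ = ∑ τ ∈ level m, ∑ w ∈ level k, g (τ ++ w) := by
  rw [← sum_product']
  refine sum_nbij' (fun τ => (τ.take m, τ.drop m)) (fun p => p.1 ++ p.2) ?_ ?_ ?_ ?_ ?_ <;>
    intro _ _ <;> simp_all [List.take_left', List.drop_left']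

section Summative

variable {R M : Type*} [Semiring R] [AddCommMonoid M] [Module R M]

def Summative (e : List Bool → M) : Prop :=
  ∀ σ, e σ = e (σ ++ [false]) + e (σ ++ [true])

lemma Summative.eq_sum_level {e : List Bool → M} (he : Summative e) (σ : List Bool) (k : ℕ) :
    e σ = ∑ w ∈ level k, e (σ ++ w) := by
  induction k with
  | zero => simp [level]
  | succ k ih =>
    rw [sum_level_add, ih]
    refine sum_congr rfl fun w _ => ?_
    simp [level_one, he (σ ++ w)]

lemma sum_level_ite_prefix (g : List Bool → M) (σ : List Bool) (k : ℕ) :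
    ∑ τ ∈ level (σ.length + k), (if σ <+: τ then g τ else 0) = ∑ w ∈ level k, g (σ ++ w) := by
  rw [sum_level_add, sum_eq_single_of_mem σ (mem_level.2 rfl)]
  · exact sum_congr rfl fun w _ => if_pos (List.prefix_append σ w)
  · intro τ hτ hne
    refine sum_eq_zero fun w _ => if_neg fun hpre => hne (Eq.symm ?_)
    exact ((List.prefix_of_prefix_length_le hpre (List.prefix_append τ w)
      (by simp_all)).eq_of_length (by simp_all))

def prefixSum (f : List Bool →₀ R) (τ : List Bool) : R :=
  ∑ σ ∈ f.support, if σ <+: τ then f σ else 0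

lemma Summative.linearCombination_eq_sum_level {e : List Bool → M} (he : Summative e)
    (f : List Bool →₀ R) {n : ℕ} (hn : ∀ σ ∈ f.support, σ.length ≤ n) :
    Finsupp.linearCombination R e f = ∑ τ ∈ level n, prefixSum f τ • e τ := by
  simp only [Finsupp.linearCombination_apply, Finsupp.sum, prefixSum, sum_smul, ite_smul,
    zero_smul]
  rw [sum_comm]
  refine sum_congr rfl fun σ hσ => ?_
  obtain ⟨k, rfl⟩ := Nat.exists_eq_add_of_le (hn σ hσ)
  rw [sum_level_ite_prefix (fun τ => f σ • e τ), ← smul_sum, ← he.eq_sum_level]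

lemma Summative.norm_linearCombination_eq {E F : Type*} [SeminormedAddCommGroup E]
    [Module R E] [SeminormedAddCommGroup F] [Module R F] {e₁ : List Bool → E}
    {e₂ : List Bool → F} (he₁ : Summative e₁) (he₂ : Summative e₂)
    (h : ∀ (n : ℕ) (c : List Bool → R),
      ‖∑ τ ∈ level n, c τ • e₁ τ‖ = ‖∑ τ ∈ level n, c τ • e₂ τ‖)
    (f : List Bool →₀ R) :
    ‖Finsupp.linearCombination R e₁ f‖ = ‖Finsupp.linearCombination R e₂ f‖ := by
  have hn : ∀ σ ∈ f.support, σ.length ≤ f.support.sup List.length := fun σ hσ => le_sup hσ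
  rw [he₁.linearCombination_eq_sum_level f hn, he₂.linearCombination_eq_sum_level f hn, h]

end Summative

lemma isAntichain_level (n : ℕ) : IsAntichain (· <+: ·) (level n : Set (List Bool)) :=
  fun σ hσ τ hτ hne hpre => hne (hpre.eq_of_length (by simp_all))

section Separating

variable {B : Type*} [SeminormedAddCommGroup B] [Module ℝ B]

def FormallySeparating (r : ℝ) (φ : List Bool → B) : Prop :=
  ∀ (n : ℕ) (ν : Fin n → List Bool),
    (∀ i j, i ≠ j → ¬ (ν i <+: ν j) ∧ ¬ (ν j <+: ν i)) →
    ∀ a : Fin n → ℝ, ‖∑ i, a i • φ (ν i)‖ ^ r = ∑ i, |a i| ^ r * ‖φ (ν i)‖ ^ r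

lemma FormallySeparating.norm_sum_rpow {r : ℝ} {φ : List Bool → B}
    (hφ : FormallySeparating r φ) {S : Finset (List Bool)}
    (hS : IsAntichain (· <+: ·) (S : Set (List Bool))) (a : List Bool → ℝ) :
    ‖∑ σ ∈ S, a σ • φ σ‖ ^ r = ∑ σ ∈ S, |a σ| ^ r * ‖φ σ‖ ^ r := by
  let ν : Fin S.card → List Bool := fun i => S.equivFin.symm i
  have hν : ∀ i j, i ≠ j → ¬ (ν i <+: ν j) ∧ ¬ (ν j <+: ν i) := fun i j hij =>
    have hne : ν i ≠ ν j := fun h => hij (S.equivFin.symm.injective (Subtype.ext h))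
    ⟨hS (S.equivFin.symm i).2 (S.equivFin.symm j).2 hne,
      hS (S.equivFin.symm j).2 (S.equivFin.symm i).2 hne.symm⟩
  rw [← sum_coe_sort S, ← sum_coe_sort S, ← S.equivFin.symm.sum_comp,
    ← S.equivFin.symm.sum_comp]
  exact hφ _ ν hν (a ∘ ν)

lemma FormallySeparating.norm_sum_level_rpow {r : ℝ} {φ : List Bool → B}
    (hφ : FormallySeparating r φ) (hr : r ≠ 0)
    (hnorm : ∀ σ : List Bool, ‖φ σ‖ = (2 : ℝ) ^ (-(σ.length : ℝ) / r)) (n : ℕ)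
    (c : List Bool → ℝ) :
    ‖∑ τ ∈ level n, c τ • φ τ‖ ^ r = ∑ τ ∈ level n, |c τ| ^ r * (2 ^ n)⁻¹ := by
  rw [hφ.norm_sum_rpow (isAntichain_level n)]
  refine sum_congr rfl fun τ hτ => ?_
  rw [hnorm, mem_level.1 hτ, ← Real.rpow_mul zero_le_two, div_mul_cancel₀ _ hr,
    Real.rpow_neg zero_le_two, Real.rpow_natCast]

end Separating

def binVal (σ : List Bool) : ℕ :=
  σ.foldl (fun n b => 2 * n + b.toNat) 0

lemma binVal_append (σ : List Bool) (b : Bool) : binVal (σ ++ [b]) = 2 * binVal σ + b.toNat := by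
  simp [binVal]

noncomputable def dyadicLeft (σ : List Bool) : ℝ := binVal σ / 2 ^ σ.length

def dyadicInterval (σ : List Bool) : Set ℝ :=
  Set.Ico (dyadicLeft σ) (dyadicLeft σ + (2 ^ σ.length)⁻¹)

lemma dyadicInterval_nil : dyadicInterval [] = Set.Ico 0 1 := by
  simp [dyadicInterval, dyadicLeft, binVal]

lemma dyadicInterval_append_false (σ : List Bool) :
    dyadicInterval (σ ++ [false]) =
      Set.Ico (dyadicLeft σ) (dyadicLeft σ + (2 ^ (σ.length + 1))⁻¹) := by
  simp only [dyadicInterval, dyadicLeft, binVal_append, List.length_append, List.length_singleton,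
    Bool.toNat_false, add_zero]
  push_cast
  rw [pow_succ]
  congr 1 <;> field_simp

lemma dyadicInterval_append_true (σ : List Bool) :
    dyadicInterval (σ ++ [true]) =
      Set.Ico (dyadicLeft σ + (2 ^ (σ.length + 1))⁻¹) (dyadicLeft σ + (2 ^ σ.length)⁻¹) := by
  simp only [dyadicInterval, dyadicLeft, binVal_append, List.length_append, List.length_singleton,
    Bool.toNat_true]
  push_cast
  rw [pow_succ]
  congr 1 <;> field_simp; ring

lemma dyadicInterval_eq_union (σ : List Bool) :
    dyadicInterval σ = dyadicInterval (σ ++ [false]) ∪ dyadicInterval (σ ++ [true]) := by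
  have hhalf : (2 ^ (σ.length + 1) : ℝ)⁻¹ ≤ (2 ^ σ.length)⁻¹ := by
    gcongr <;> norm_num
  rw [dyadicInterval_append_false, dyadicInterval_append_true, dyadicInterval,
    Set.Ico_union_Ico_eq_Ico (by simp) (by simpa using hhalf)]

lemma disjoint_dyadicInterval_append (σ : List Bool) :
    Disjoint (dyadicInterval (σ ++ [false])) (dyadicInterval (σ ++ [true])) := by
  rw [dyadicInterval_append_false, dyadicInterval_append_true]
  exact Set.Ico_disjoint_Ico_same

lemma summative_indicator_dyadicInterval :
    Summative fun σ => (dyadicInterval σ).indicator (1 : ℝ → ℝ) := by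
  intro σ
  dsimp only
  rw [dyadicInterval_eq_union σ]
  exact Set.indicator_union_of_disjoint (disjoint_dyadicInterval_append σ) _

/- Covering of `[0, 1)`, disjointness on each level and `dyadicInterval σ ⊆ [0, 1)` are all read
off this identity, without arithmetic on the endpoints. -/
lemma sum_level_indicator_dyadicInterval (n : ℕ) (x : ℝ) :
    ∑ τ ∈ level n, (dyadicInterval τ).indicator (1 : ℝ → ℝ) x =
      (Set.Ico (0 : ℝ) 1).indicator 1 x := by
  rw [← Finset.sum_apply, ← dyadicInterval_nil,
    summative_indicator_dyadicInterval.eq_sum_level [] n]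
  rfl

lemma dyadicInterval_subset (σ : List Bool) : dyadicInterval σ ⊆ Set.Ico 0 1 := by
  intro x hx
  by_contra hx'
  have h := single_le_sum (f := fun τ => (dyadicInterval τ).indicator (1 : ℝ → ℝ) x)
    (fun τ _ => Set.indicator_nonneg (fun _ _ => zero_le_one) x)
    (mem_level.2 rfl : σ ∈ level σ.length)
  rw [sum_level_indicator_dyadicInterval, Set.indicator_of_mem hx,
    Set.indicator_of_notMem hx'] at h
  exact one_pos.not_ge h

lemma pairwiseDisjoint_dyadicInterval (n : ℕ) :
    (level n : Set (List Bool)).PairwiseDisjoint dyadicInterval := by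
  intro τ hτ τ' hτ' hne
  refine Set.disjoint_left.2 fun x hx hx' => ?_
  have h := sum_le_sum_of_subset_of_nonneg
    (f := fun ρ => (dyadicInterval ρ).indicator (1 : ℝ → ℝ) x) (s := {τ, τ'}) (t := level n)
    (by simp_all [insert_subset_iff])
    (fun ρ _ _ => Set.indicator_nonneg (fun _ _ => zero_le_one) x)
  rw [sum_pair hne, sum_level_indicator_dyadicInterval, Set.indicator_of_mem hx,
    Set.indicator_of_mem hx', Set.indicator_of_mem (dyadicInterval_subset τ hx)] at h
  norm_num at h

lemma exists_mem_dyadicInterval {x : ℝ} (hx : x ∈ Set.Ico 0 1) (n : ℕ) :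
    ∃ τ ∈ level n, x ∈ dyadicInterval τ := by
  have h : ∑ τ ∈ level n, (dyadicInterval τ).indicator (1 : ℝ → ℝ) x ≠ 0 := by
    simp [sum_level_indicator_dyadicInterval, Set.indicator_of_mem hx]
  obtain ⟨τ, hτ, hxτ⟩ := exists_ne_zero_of_sum_ne_zero h
  exact ⟨τ, hτ, Set.mem_of_indicator_ne_zero hxτ⟩

lemma dyadicInterval_subset_Icc (σ : List Bool) : dyadicInterval σ ⊆ Set.Icc 0 1 :=
  (dyadicInterval_subset σ).trans Set.Ico_subset_Icc_self

lemma measurableSet_dyadicInterval (σ : List Bool) : MeasurableSet (dyadicInterval σ) :=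
  measurableSet_Ico

lemma volume_dyadicInterval (σ : List Bool) :
    volume (dyadicInterval σ) = ENNReal.ofReal (2 ^ σ.length)⁻¹ := by
  rw [dyadicInterval, Real.volume_Ico, add_sub_cancel_left]

lemma dyadicLeft_mem (σ : List Bool) : dyadicLeft σ ∈ dyadicInterval σ :=
  ⟨le_rfl, lt_add_of_pos_right _ (by positivity)⟩

lemma dist_le_of_mem_dyadicInterval {σ : List Bool} {x y : ℝ} (hx : x ∈ dyadicInterval σ)
    (hy : y ∈ dyadicInterval σ) : dist x y ≤ (2 ^ σ.length)⁻¹ := by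
  simpa using Real.dist_le_of_mem_Icc (Set.Ico_subset_Icc_self hx) (Set.Ico_subset_Icc_self hy)

variable (p : ENNReal)

local notation "μI" => volume.restrict (Set.Icc (0 : ℝ) 1)

noncomputable def dyadicIndicator (σ : List Bool) : Lp ℝ p μI :=
  indicatorConstLp p (measurableSet_dyadicInterval σ) (measure_ne_top _ (dyadicInterval σ)) 1

lemma summative_dyadicIndicator : Summative (dyadicIndicator p) := by
  intro σ
  rw [dyadicIndicator, dyadicIndicator, dyadicIndicator, ← indicatorConstLp_disjoint_union
    (measurableSet_dyadicInterval _) (measurableSet_dyadicInterval _) _ _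
    (disjoint_dyadicInterval_append σ)]
  congr 1
  exact dyadicInterval_eq_union σ

variable {p}

lemma norm_sum_level_smul_dyadicIndicator_rpow (hp₀ : p ≠ 0) (hp : p ≠ ⊤) (n : ℕ)
    (c : List Bool → ℝ) :
    ‖∑ τ ∈ level n, c τ • dyadicIndicator p τ‖ ^ p.toReal =
      ∑ τ ∈ level n, |c τ| ^ p.toReal * (2 ^ n)⁻¹ := by
  refine (norm_sum_smul_indicatorConstLp_rpow measurableSet_dyadicInterval
    (fun τ => measure_ne_top _ (dyadicInterval τ)) hp₀ hp (pairwiseDisjoint_dyadicInterval n)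
    c).trans (sum_congr rfl fun τ hτ => ?_)
  rw [Measure.real, Measure.restrict_eq_self _ (dyadicInterval_subset_Icc τ), volume_dyadicInterval,
    ENNReal.toReal_ofReal (by positivity), mem_level.1 hτ]

lemma sum_level_indicator_dyadicInterval_of_mem {n : ℕ} {τ : List Bool} (hτ : τ ∈ level n)
    {x : ℝ} (hx : x ∈ dyadicInterval τ) (c : List Bool → ℝ) :
    ∑ ρ ∈ level n, (dyadicInterval ρ).indicator (fun _ => c ρ) x = c τ := by
  rw [sum_eq_single_of_mem τ hτ fun ρ hρ hne => Set.indicator_of_notMem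
    (Set.disjoint_right.1 (pairwiseDisjoint_dyadicInterval n hρ hτ hne) hx) _,
    Set.indicator_of_mem hx]

lemma exists_dist_dyadicLeft_lt {g : ℝ → ℝ} (hg : ContinuousOn g (Set.Icc 0 1)) {ε : ℝ}
    (hε : 0 < ε) :
    ∃ n, ∀ τ ∈ level n, ∀ x ∈ dyadicInterval τ, dist (g x) (g (dyadicLeft τ)) < ε := by
  obtain ⟨δ, hδ, hgδ⟩ := Metric.uniformContinuousOn_iff.1
    (isCompact_Icc.uniformContinuousOn_of_continuous hg) ε hε
  obtain ⟨n, hn⟩ := exists_pow_lt_of_lt_one hδ one_half_lt_one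
  refine ⟨n, fun τ hτ x hx => hgδ x (dyadicInterval_subset_Icc τ hx) _
    (dyadicInterval_subset_Icc τ (dyadicLeft_mem τ)) ?_⟩
  calc dist x (dyadicLeft τ) ≤ (2 ^ τ.length)⁻¹ :=
        dist_le_of_mem_dyadicInterval hx (dyadicLeft_mem τ)
    _ = (1 / 2) ^ n := by rw [mem_level.1 hτ, one_div, inv_pow]
    _ < δ := hn

lemma dense_span_dyadicIndicator [Fact (1 ≤ p)] (hp : p ≠ ⊤) :
    Dense (Submodule.span ℝ (Set.range (dyadicIndicator p)) : Set (Lp ℝ p μI)) := by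
  refine dense_closure.1 (Dense.mono ?_ (BoundedContinuousFunction.toLp_denseRange ℝ μI ℝ hp))
  rintro _ ⟨g, rfl⟩
  refine Metric.mem_closure_iff.2 fun ε hε => ?_
  obtain ⟨n, hn⟩ := exists_dist_dyadicLeft_lt g.continuous.continuousOn (half_pos hε)
  refine ⟨∑ τ ∈ level n, g (dyadicLeft τ) • dyadicIndicator p τ,
    sum_mem fun τ _ => Submodule.smul_mem _ _ (Submodule.subset_span ⟨τ, rfl⟩), ?_⟩
  have hIco : ∀ᵐ x ∂μI, x ∈ Set.Ico (0 : ℝ) 1 := by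
    rw [Measure.restrict_congr_set Ico_ae_eq_Icc.symm]
    exact ae_restrict_mem measurableSet_Ico
  have hstep : ⇑(∑ τ ∈ level n, g (dyadicLeft τ) • dyadicIndicator p τ) =ᵐ[μI]
      fun x => ∑ τ ∈ level n, (dyadicInterval τ).indicator (fun _ => g (dyadicLeft τ)) x :=
    coeFn_sum_smul_indicatorConstLp measurableSet_dyadicInterval _ (level n) _
  have hbound : ∀ᵐ x ∂μI, ‖(BoundedContinuousFunction.toLp p μI ℝ g -
      ∑ τ ∈ level n, g (dyadicLeft τ) • dyadicIndicator p τ) x‖ ≤ ε / 2 := by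
    filter_upwards [hIco, Lp.coeFn_sub (BoundedContinuousFunction.toLp p μI ℝ g) _,
      BoundedContinuousFunction.coeFn_toLp p μI ℝ g, hstep] with x hx hsub htoLp hstepx
    obtain ⟨τ, hτ, hxτ⟩ := exists_mem_dyadicInterval hx n
    rw [hsub, Pi.sub_apply, htoLp, hstepx, sum_level_indicator_dyadicInterval_of_mem hτ hxτ,
      ← dist_eq_norm]
    exact (hn τ hτ x hxτ).le
  rw [dist_eq_norm]
  refine (Lp.norm_le_of_ae_bound (half_pos hε).le hbound).trans_lt ?_
  simp [measureUnivNNReal, hε]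

end BinaryTree

open BinaryTree in
theorem stmt14_general (r : ℝ) (hr : 1 ≤ r) [Fact (1 ≤ ENNReal.ofReal r)]
    {B : Type*} [NormedAddCommGroup B] [NormedSpace ℝ B] [CompleteSpace B]
    (φ : List Bool → B)
    -- summative
    (hsum : ∀ σ : List Bool, φ σ = φ (σ ++ [false]) + φ (σ ++ [true]))
    -- formally `L^r`-separating
    (hsep : ∀ (n : ℕ) (ν : Fin n → List Bool),
      (∀ i j, i ≠ j → ¬ (ν i <+: ν j) ∧ ¬ (ν j <+: ν i)) →
      ∀ a : Fin n → ℝ,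
        ‖∑ i, a i • φ (ν i)‖ ^ r = ∑ i, |a i| ^ r * ‖φ (ν i)‖ ^ r)
    -- linearly dense range
    (hdense : (Submodule.span ℝ (Set.range φ)).topologicalClosure = ⊤)
    -- norms
    (hnorm : ∀ σ : List Bool, ‖φ σ‖ = (2 : ℝ) ^ (-(σ.length : ℝ) / r)) :
    Nonempty
      (B ≃ₗᵢ[ℝ] Lp ℝ (ENNReal.ofReal r) (volume.restrict (Set.Icc (0 : ℝ) 1))) := by
  have hr₀ : 0 < r := zero_lt_one.trans_le hr
  have hp₀ : ENNReal.ofReal r ≠ 0 := ENNReal.ofReal_ne_zero_iff.2 hr₀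
  have hp : (ENNReal.ofReal r).toReal = r := ENNReal.toReal_ofReal hr₀.le
  have hψ := norm_sum_level_smul_dyadicIndicator_rpow hp₀ ENNReal.ofReal_ne_top
  rw [hp] at hψ
  have hlevel : ∀ (n : ℕ) (c : List Bool → ℝ), ‖∑ τ ∈ level n, c τ • φ τ‖ =
      ‖∑ τ ∈ level n, c τ • dyadicIndicator (ENNReal.ofReal r) τ‖ := fun n c => by
    rw [← Real.rpow_left_inj (norm_nonneg _) (norm_nonneg _) hr₀.ne', hψ,
      FormallySeparating.norm_sum_level_rpow hsep hr₀.ne' hnorm]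
  have hiso := Summative.norm_linearCombination_eq hsum
    (summative_dyadicIndicator (ENNReal.ofReal r)) hlevel
  have hdφ : DenseRange (Finsupp.linearCombination ℝ φ) :=
    Finsupp.denseRange_linearCombination_iff.2
      (Submodule.dense_iff_topologicalClosure_eq_top.2 hdense)
  have hdψ : DenseRange (Finsupp.linearCombination ℝ (dyadicIndicator (ENNReal.ofReal r))) :=
    Finsupp.denseRange_linearCombination_iff.2 (dense_span_dyadicIndicator ENNReal.ofReal_ne_top)
  exact ⟨(LinearEquiv.refl ℝ (List Bool →₀ ℝ)).extendOfIsometry _ _ hdφ hdψ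
    fun f => (hiso f).symm⟩

/-- a real Banach space admitting an `L^r`-formal disintegration
indexed by the full binary tree with `‖φ(σ)‖ = 2^{-|σ|/r}` is isometrically
isomorphic to `L^r([0,1]; ℝ)`. -/
theorem stmt14 (r : ℝ) (hr : 1 ≤ r) [Fact (1 ≤ ENNReal.ofReal r)]
    {B : Type*} [NormedAddCommGroup B] [NormedSpace ℝ B] [CompleteSpace B]
    (φ : List Bool → B)
    -- summative
    (hsum : ∀ σ : List Bool, φ σ = φ (σ ++ [false]) + φ (σ ++ [true]))
    -- formally `L^r`-separating
    (hsep : ∀ (n : ℕ) (ν : Fin n → List Bool),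
      (∀ i j, i ≠ j → ¬ (ν i <+: ν j) ∧ ¬ (ν j <+: ν i)) →
      ∀ a : Fin n → ℝ,
        ‖∑ i, a i • φ (ν i)‖ ^ r = ∑ i, |a i| ^ r * ‖φ (ν i)‖ ^ r)
    -- never zero
    (hne : ∀ σ : List Bool, φ σ ≠ 0)
    -- linearly dense range
    (hdense : (Submodule.span ℝ (Set.range φ)).topologicalClosure = ⊤)
    -- norms
    (hnorm : ∀ σ : List Bool, ‖φ σ‖ = (2 : ℝ) ^ (-(σ.length : ℝ) / r)) :
    Nonempty
      (B ≃ₗᵢ[ℝ] Lp ℝ (ENNReal.ofReal r) (volume.restrict (Set.Icc (0 : ℝ) 1))) :=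
  stmt14_general r hr φ hsum hsep hdense hnorm
end

section
/- Suppose 1 ≤ p < ∞, p ≠ 2, and f, g ∈ L^p(Ω; 𝔽) satisfy ‖αf + βg‖_p^p = |α|^p‖f‖_p^p + |β|^p‖g‖_p^p for all scalars α, β. Then f and g are disjointly supported: f·g = 0 almost everywhere. -/
/-!
Write `A = ‖a‖²`, `B = ‖b‖²`, `u = ‖a + b‖²`, `v = ‖a - b‖²` and `r = p / 2`, so that
`(u + v) / 2 = A + B` by the parallelogram law. Then the defect
`(‖a + b‖ᵖ + ‖a - b‖ᵖ) / 2 - ‖a‖ᵖ - ‖b‖ᵖ = ((uʳ + vʳ) / 2 - ((u + v) / 2)ʳ) + ((A + B)ʳ - Aʳ - Bʳ)`,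
and both brackets have the sign of `r - 1`: the first by convexity or concavity of `s ↦ sʳ`,
the second by its super- or subadditivity, which is strict unless `A = 0` or `B = 0`.
The hypothesis at `(α, β) = (1, 1)` and `(1, -1)` says that this defect, evaluated at
`(a, b) = (f t, g t)`, has integral zero; having constant sign, it vanishes almost everywhere,
and by strictness so does `f t * g t`.
-/

open MeasureTheory

namespace Real

lemma mul_rpow_sub_rpow_pos {x z s : ℝ} (hx : 0 < x) (hxz : x < z) (hs : s ≠ 0) :
    0 < s * (z ^ s - x ^ s) := by
  rcases hs.lt_or_gt with hs | hs
  · exact mul_pos_of_neg_of_neg hs (sub_neg.2 (rpow_lt_rpow_of_neg hx hxz hs))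
  · exact mul_pos hs (sub_pos.2 (rpow_lt_rpow hx.le hxz hs))

lemma sub_one_mul_add_rpow_sub_pos {x y r : ℝ} (hx : 0 < x) (hy : 0 < y) (hr : r ≠ 1) :
    0 < (r - 1) * ((x + y) ^ r - (x ^ r + y ^ r)) := by
  have hxy : 0 < x + y := add_pos hx hy
  have key : (r - 1) * ((x + y) ^ r - (x ^ r + y ^ r)) =
      x * ((r - 1) * ((x + y) ^ (r - 1) - x ^ (r - 1)))
        + y * ((r - 1) * ((x + y) ^ (r - 1) - y ^ (r - 1))) := by
    conv_lhs => rw [← sub_add_cancel r 1, rpow_add_one hx.ne', rpow_add_one hy.ne',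
      rpow_add_one hxy.ne']
    ring
  rw [key]
  have hs : r - 1 ≠ 0 := sub_ne_zero.2 hr
  exact add_pos (mul_pos hx (mul_rpow_sub_rpow_pos hx (lt_add_of_pos_right x hy) hs))
    (mul_pos hy (mul_rpow_sub_rpow_pos hy (lt_add_of_pos_left y hx) hs))

lemma sub_one_mul_add_rpow_sub_nonneg {x y r : ℝ} (hx : 0 ≤ x) (hy : 0 ≤ y) (hr : 0 ≤ r) :
    0 ≤ (r - 1) * ((x + y) ^ r - (x ^ r + y ^ r)) := by
  rcases le_total 1 r with hr1 | hr1
  · exact mul_nonneg (sub_nonneg.2 hr1) (sub_nonneg.2 (add_rpow_le_rpow_add hx hy hr1))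
  · exact mul_nonneg_of_nonpos_of_nonpos (sub_nonpos.2 hr1)
      (sub_nonpos.2 (rpow_add_le_add_rpow hx hy hr hr1))

lemma sub_one_mul_midpoint_rpow_sub_nonneg {u v r : ℝ} (hu : 0 ≤ u) (hv : 0 ≤ v) (hr : 0 ≤ r) :
    0 ≤ (r - 1) * ((u ^ r + v ^ r) / 2 - ((u + v) / 2) ^ r) := by
  have hmid : (u + v) / 2 = (1 / 2 : ℝ) • u + (1 / 2 : ℝ) • v := by
    simp only [smul_eq_mul]; ring
  have hhalf : (0 : ℝ) ≤ 1 / 2 := by norm_num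
  have hsum : (1 / 2 : ℝ) + 1 / 2 = 1 := by norm_num
  rcases le_total 1 r with hr1 | hr1
  · have h := (convexOn_rpow hr1).2 (Set.mem_Ici.2 hu) (Set.mem_Ici.2 hv) hhalf hhalf hsum
    rw [← hmid] at h
    simp only [smul_eq_mul] at h
    exact mul_nonneg (sub_nonneg.2 hr1) (by linarith)
  · have h := (concaveOn_rpow hr hr1).2 (Set.mem_Ici.2 hu) (Set.mem_Ici.2 hv) hhalf hhalf hsum
    rw [← hmid] at h
    simp only [smul_eq_mul] at h
    exact mul_nonneg_of_nonpos_of_nonpos (sub_nonpos.2 hr1) (by linarith)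

lemma sq_rpow_div_two {x : ℝ} (hx : 0 ≤ x) (p : ℝ) : (x ^ 2) ^ (p / 2) = x ^ p := by
  rw [← rpow_natCast_mul hx]
  congr 1
  push_cast
  ring

end Real

section ParallelogramDefect

variable {E : Type*} [NormedAddCommGroup E] [InnerProductSpace ℝ E]

noncomputable def parallelogramDefect {F : Type*} [Norm F] [Add F] [Sub F] (p : ℝ) (a b : F) :
    ℝ :=
  (‖a + b‖ ^ p + ‖a - b‖ ^ p) / 2 - (‖a‖ ^ p + ‖b‖ ^ p)

lemma parallelogramDefect_eq (p : ℝ) (a b : E) :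
    parallelogramDefect p a b =
      (((‖a + b‖ ^ 2) ^ (p / 2) + (‖a - b‖ ^ 2) ^ (p / 2)) / 2
          - ((‖a + b‖ ^ 2 + ‖a - b‖ ^ 2) / 2) ^ (p / 2))
        + ((‖a‖ ^ 2 + ‖b‖ ^ 2) ^ (p / 2) - ((‖a‖ ^ 2) ^ (p / 2) + (‖b‖ ^ 2) ^ (p / 2))) := by
  have hpar : (‖a + b‖ ^ 2 + ‖a - b‖ ^ 2) / 2 = ‖a‖ ^ 2 + ‖b‖ ^ 2 := by
    have := parallelogram_law_with_norm ℝ a b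
    nlinarith
  simp only [hpar, Real.sq_rpow_div_two (norm_nonneg _), parallelogramDefect]
  ring

lemma sub_two_mul_parallelogramDefect_nonneg {p : ℝ} (hp : 0 ≤ p) (a b : E) :
    0 ≤ (p - 2) * parallelogramDefect p a b := by
  have hr : 0 ≤ p / 2 := by positivity
  rw [parallelogramDefect_eq, show p - 2 = 2 * (p / 2 - 1) by ring, mul_assoc, mul_add]
  exact mul_nonneg zero_le_two <| add_nonneg
    (Real.sub_one_mul_midpoint_rpow_sub_nonneg (by positivity) (by positivity) hr)
    (Real.sub_one_mul_add_rpow_sub_nonneg (by positivity) (by positivity) hr)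

lemma eq_zero_or_eq_zero_of_parallelogramDefect_eq_zero {p : ℝ} (hp : 0 ≤ p) (hp2 : p ≠ 2)
    {a b : E} (h : parallelogramDefect p a b = 0) : a = 0 ∨ b = 0 := by
  by_contra! hab
  have hr1 : p / 2 ≠ 1 := fun h' => hp2 (by linarith)
  have hmid := Real.sub_one_mul_midpoint_rpow_sub_nonneg (sq_nonneg ‖a + b‖)
    (sq_nonneg ‖a - b‖) (div_nonneg hp zero_le_two)
  have hadd := Real.sub_one_mul_add_rpow_sub_pos (pow_pos (norm_pos_iff.2 hab.1) 2)
    (pow_pos (norm_pos_iff.2 hab.2) 2) hr1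
  rw [parallelogramDefect_eq] at h
  nlinarith

end ParallelogramDefect

namespace MeasureTheory

variable {X : Type*} [MeasurableSpace X] {μ : Measure X} {F : Type*} [NormedAddCommGroup F]
  {p : ℝ}

lemma MemLp.toReal_eLpNorm_ofReal_rpow (hp : 0 < p) {h : X → F}
    (hh : MemLp h (ENNReal.ofReal p) μ) :
    (eLpNorm h (ENNReal.ofReal p) μ).toReal ^ p = ∫ x, ‖h x‖ ^ p ∂μ := by
  have hI : 0 ≤ ∫ x, ‖h x‖ ^ p ∂μ := integral_nonneg fun x => by positivity
  rw [hh.eLpNorm_eq_integral_rpow_norm (by simpa using hp) ENNReal.ofReal_ne_top,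
    ENNReal.toReal_ofReal hp.le, ENNReal.toReal_ofReal (by positivity), ← Real.rpow_mul hI,
    inv_mul_cancel₀ hp.ne', Real.rpow_one]

lemma MemLp.integrable_norm_rpow_ofReal (hp : 0 < p) {h : X → F}
    (hh : MemLp h (ENNReal.ofReal p) μ) : Integrable (fun x => ‖h x‖ ^ p) μ := by
  simpa [ENNReal.toReal_ofReal hp.le] using
    hh.integrable_norm_rpow (by simpa using hp) ENNReal.ofReal_ne_top

variable {f g : X → F}

lemma MemLp.integrable_parallelogramDefect (hp : 0 < p) (hf : MemLp f (ENNReal.ofReal p) μ)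
    (hg : MemLp g (ENNReal.ofReal p) μ) :
    Integrable (fun x => parallelogramDefect p (f x) (g x)) μ :=
  ((((hf.add hg).integrable_norm_rpow_ofReal hp).add
    ((hf.sub hg).integrable_norm_rpow_ofReal hp)).div_const 2).sub
    ((hf.integrable_norm_rpow_ofReal hp).add (hg.integrable_norm_rpow_ofReal hp))

lemma MemLp.integral_parallelogramDefect (hp : 0 < p) (hf : MemLp f (ENNReal.ofReal p) μ)
    (hg : MemLp g (ENNReal.ofReal p) μ) :
    ∫ x, parallelogramDefect p (f x) (g x) ∂μ =
      ((eLpNorm (f + g) (ENNReal.ofReal p) μ).toReal ^ p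
          + (eLpNorm (f - g) (ENNReal.ofReal p) μ).toReal ^ p) / 2
        - ((eLpNorm f (ENNReal.ofReal p) μ).toReal ^ p
          + (eLpNorm g (ENNReal.ofReal p) μ).toReal ^ p) := by
  have hfg : Integrable (fun x => ‖f x + g x‖ ^ p) μ := (hf.add hg).integrable_norm_rpow_ofReal hp
  have hf_g : Integrable (fun x => ‖f x - g x‖ ^ p) μ := (hf.sub hg).integrable_norm_rpow_ofReal hp
  have hf' := hf.integrable_norm_rpow_ofReal hp
  have hg' := hg.integrable_norm_rpow_ofReal hp
  have hmean : Integrable (fun x => (‖f x + g x‖ ^ p + ‖f x - g x‖ ^ p) / 2) μ :=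
    (hfg.add hf_g).div_const 2
  have hsum : Integrable (fun x => ‖f x‖ ^ p + ‖g x‖ ^ p) μ := hf'.add hg'
  rw [hf.toReal_eLpNorm_ofReal_rpow hp, hg.toReal_eLpNorm_ofReal_rpow hp,
    (hf.add hg).toReal_eLpNorm_ofReal_rpow hp, (hf.sub hg).toReal_eLpNorm_ofReal_rpow hp]
  simp only [parallelogramDefect, Pi.add_apply, Pi.sub_apply]
  rw [integral_sub hmean hsum, integral_div, integral_add hfg hf_g, integral_add hf' hg']

end MeasureTheory

lemma ae_eq_zero_or_eq_zero_of_integral_parallelogramDefect_eq_zero {X E : Type*}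
    [MeasurableSpace X] {μ : Measure X} [NormedAddCommGroup E] [InnerProductSpace ℝ E]
    {p : ℝ} (hp : 0 ≤ p) (hp2 : p ≠ 2) {f g : X → E}
    (hint : Integrable (fun x => parallelogramDefect p (f x) (g x)) μ)
    (h0 : ∫ x, parallelogramDefect p (f x) (g x) ∂μ = 0) :
    ∀ᵐ x ∂μ, f x = 0 ∨ g x = 0 := by
  have hzero : ∫ x, (p - 2) * parallelogramDefect p (f x) (g x) ∂μ = 0 := by
    rw [integral_const_mul, h0, mul_zero]
  have hae := (integral_eq_zero_iff_of_nonneg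
    (fun x => sub_two_mul_parallelogramDefect_nonneg hp (f x) (g x)) (hint.const_mul _)).1 hzero
  filter_upwards [hae] with x hx
  exact eq_zero_or_eq_zero_of_parallelogramDefect_eq_zero hp hp2
    ((mul_eq_zero.1 hx).resolve_left (sub_ne_zero.2 hp2))

/-- Lamperti: for `p ≠ 2`, `L^p`-formally disjointly supported
functions in `L^p(Ω; 𝕜)` are disjointly supported. -/
theorem stmt19 {X : Type*} [MeasurableSpace X] (μ : Measure X)
    {𝕜 : Type*} [RCLike 𝕜] (p : ℝ) (hp : 1 ≤ p) (hp2 : p ≠ 2)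
    (f g : X → 𝕜)
    (hf : MemLp f (ENNReal.ofReal p) μ) (hg : MemLp g (ENNReal.ofReal p) μ)
    (hformal : ∀ α β : 𝕜,
      (eLpNorm (α • f + β • g) (ENNReal.ofReal p) μ).toReal ^ p
        = ‖α‖ ^ p * (eLpNorm f (ENNReal.ofReal p) μ).toReal ^ p
          + ‖β‖ ^ p * (eLpNorm g (ENNReal.ofReal p) μ).toReal ^ p) :
    ∀ᵐ t ∂μ, f t * g t = 0 := by
  have hp0 : 0 < p := by linarith
  have hadd := hformal 1 1
  have hsub := hformal 1 (-1)
  simp only [one_smul, neg_smul, ← sub_eq_add_neg, norm_one, norm_neg, Real.one_rpow,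
    one_mul] at hadd hsub
  have h0 : ∫ t, parallelogramDefect p (f t) (g t) ∂μ = 0 := by
    rw [hf.integral_parallelogramDefect hp0 hg, hadd, hsub]
    ring
  filter_upwards [ae_eq_zero_or_eq_zero_of_integral_parallelogramDefect_eq_zero hp0.le hp2
    (hf.integrable_parallelogramDefect hp0 hg) h0] with t ht
  exact mul_eq_zero.2 ht
end
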